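/- arXiv:0901.0236 — 11 statements merged into one kernel-verified Lean document; each statement's English description precedes it below -/
import Mathlib

section
/- Every ultrametric space is economical: for each infinite subset A of an ultrametric space (X,d), the set of distances {d(a,b) : a,b ∈ A} has cardinality at most the density of A. -/
universe u

/-- The density of a subspace `A`: the minimal cardinality of a subset `D ⊆ A`
that is dense in `A` (i.e. `A ⊆ closure D`). -/
noncomputable def dens {X : Type u} [TopologicalSpace X] (A : Set X) : Cardinal.{u} :=
  ⨅ D : {D : Set X // D ⊆ A ∧ A ⊆ closure D}, Cardinal.mk D.1

/-- Every ultrametric space is economical: for each infinite subset `A` of an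
ultrametric space `(X, dist)`, the set of distances `{dist a b : a, b ∈ A}` has
cardinality at most the density of `A`. -/
theorem ultrametric_economical {X : Type u} [MetricSpace X]
    (ultra : ∀ x y z : X, dist x z ≤ max (dist x y) (dist y z))
    (A : Set X) (hA : A.Infinite) :
    Cardinal.lift.{u} (Cardinal.mk (Set.image2 dist A A)) ≤ dens A := by
  have : Nonempty {D : Set X // D ⊆ A ∧ A ⊆ closure D} :=
    ⟨⟨A, Set.Subset.rfl, subset_closure⟩⟩
  refine le_ciInf fun ⟨D, hDA, hAD⟩ => ?_
  -- D is infinite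
  have hDinf : D.Infinite := by
    by_contra h
    rw [Set.not_infinite] at h
    have : A ⊆ D := by
      have := h.isClosed.closure_eq
      rwa [this] at hAD
    exact hA (h.subset this)
  -- every distance in A is 0 or a distance in D
  have key : Set.image2 dist A A ⊆ insert (0 : ℝ) (Set.image2 dist D D) := by
    rintro r ⟨a, ha, b, hb, rfl⟩
    rcases eq_or_ne (dist a b) 0 with h0 | h0
    · exact Or.inl h0
    have hpos : 0 < dist a b := lt_of_le_of_ne dist_nonneg (Ne.symm h0)
    obtain ⟨d1, hd1D, hd1⟩ := Metric.mem_closure_iff.mp (hAD ha) _ hpos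
    obtain ⟨d2, hd2D, hd2⟩ := Metric.mem_closure_iff.mp (hAD hb) _ hpos
    refine Or.inr ⟨d1, hd1D, d2, hd2D, ?_⟩
    have hle : dist d1 d2 ≤ dist a b := by
      calc dist d1 d2 ≤ max (dist d1 a) (dist a d2) := ultra _ _ _
        _ ≤ max (dist d1 a) (max (dist a b) (dist b d2)) := by
            exact max_le_max le_rfl (ultra _ _ _)
        _ ≤ dist a b := by
            rw [dist_comm d1 a]
            exact max_le hd1.le (max_le le_rfl hd2.le)
    have hge : dist a b ≤ dist d1 d2 := by
      have h1 : dist a b ≤ max (dist a d1) (max (dist d1 d2) (dist d2 b)) :=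
        le_trans (ultra a d1 b) (max_le_max le_rfl (ultra _ _ _))
      rcases max_cases (dist a d1) (max (dist d1 d2) (dist d2 b)) with ⟨heq, _⟩ | ⟨heq, _⟩
      · rw [heq] at h1; exact absurd h1 (not_le.mpr hd1)
      · rw [heq] at h1
        rcases max_cases (dist d1 d2) (dist d2 b) with ⟨heq2, _⟩ | ⟨heq2, _⟩
        · rwa [heq2] at h1
        · rw [heq2] at h1
          rw [dist_comm d2 b] at h1
          exact absurd h1 (not_le.mpr hd2)
    linarith
  -- cardinal arithmetic
  have haleph : Cardinal.aleph0 ≤ Cardinal.mk D := by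
    rw [Cardinal.infinite_iff.symm, Set.infinite_coe_iff]; exact hDinf
  have h1 : Cardinal.mk (Set.image2 dist A A) ≤
      Cardinal.mk (insert (0 : ℝ) (Set.image2 dist D D) : Set ℝ) :=
    Cardinal.mk_le_mk_of_subset key
  have h2 : Cardinal.mk (insert (0 : ℝ) (Set.image2 dist D D) : Set ℝ) ≤
      Cardinal.mk (Set.image2 dist D D) + 1 := Cardinal.mk_insert_le
  have hsurj : Function.Surjective
      (fun p : D × D => (⟨dist p.1 p.2, Set.mem_image2_of_mem p.1.2 p.2.2⟩ :
        Set.image2 dist D D)) := by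
    rintro ⟨r, d1, hd1, d2, hd2, rfl⟩
    exact ⟨(⟨d1, hd1⟩, ⟨d2, hd2⟩), rfl⟩
  have h3 : Cardinal.lift.{u} (Cardinal.mk (Set.image2 dist D D)) ≤
      Cardinal.lift.{0} (Cardinal.mk (D × D : Type u)) :=
    Cardinal.lift_mk_le'.mpr ⟨Function.Embedding.ofSurjective _ hsurj⟩
  simp only [Cardinal.lift_id'] at h3
  have h4 : Cardinal.mk (D × D : Type u) = Cardinal.mk D := by
    simp [Cardinal.mk_prod, Cardinal.mul_eq_self haleph]
  calc Cardinal.lift.{u} (Cardinal.mk (Set.image2 dist A A))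
      ≤ Cardinal.lift.{u} (Cardinal.mk (Set.image2 dist D D) + 1) :=
        Cardinal.lift_le.mpr (h1.trans h2)
    _ = Cardinal.lift.{u} (Cardinal.mk (Set.image2 dist D D)) + 1 := by
        rw [Cardinal.lift_add, Cardinal.lift_one]
    _ ≤ Cardinal.mk D + 1 := by
        rw [h4] at h3; exact add_le_add_left h3 1
    _ = Cardinal.mk D := by
        exact Cardinal.add_one_eq haleph
end

section
/- If (X,d) is an economical metric space, then every subspace A ⊂ X with density strictly less than the continuum is zero-dimensional (has a base of clopen sets). -/
universe u

/-- A metric space is economical if for every infinite subset `A`, the set of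
distances `{dist a b : a, b ∈ A}` has cardinality at most the density of `A`. -/
def Economical (X : Type u) [MetricSpace X] : Prop :=
  ∀ A : Set X, A.Infinite →
    Cardinal.lift.{u} (Cardinal.mk (Set.image2 dist A A)) ≤ dens A

/-- In an economical metric space, every subspace of density less than the
continuum is zero-dimensional, i.e. has a base of clopen sets. -/
theorem economical_small_density_zero_dimensional {X : Type u} [MetricSpace X]
    (hX : Economical X) (A : Set X) (hA : dens A < Cardinal.continuum) :
    ∃ B : Set (Set A), (∀ U ∈ B, IsClopen U) ∧ TopologicalSpace.IsTopologicalBasis B := by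
  by_cases hfin : A.Finite
  · haveI : Finite A := hfin
    haveI : DiscreteTopology A := Finite.instDiscreteTopology
    exact ⟨{s | IsOpen s}, fun U _ => isClopen_discrete U,
      TopologicalSpace.isTopologicalBasis_opens⟩
  · have hAinf : A.Infinite := hfin
    have hD : Cardinal.mk (Set.image2 dist A A) < Cardinal.continuum := by
      have h1 := hX A hAinf
      have h2 := lt_of_le_of_lt h1 hA
      exact Cardinal.lift_lt_continuum.mp h2
    have key : ∀ ε : ℝ, 0 < ε → ∃ r, 0 < r ∧ r < ε ∧ r ∉ Set.image2 dist A A := by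
      intro ε hε
      by_contra h
      push_neg at h
      have hsub : Set.Ioo (0:ℝ) ε ⊆ Set.image2 dist A A := fun r hr => h r hr.1 hr.2
      have hle := Cardinal.mk_le_mk_of_subset hsub
      rw [Cardinal.mk_Ioo_real hε] at hle
      exact absurd (lt_of_le_of_lt hle hD) (lt_irrefl _)
    refine ⟨{U | ∃ (x : A) (r : ℝ), 0 < r ∧ (∀ y : A, dist (y : X) (x : X) ≠ r) ∧
      U = Metric.ball x r}, ?_, ?_⟩
    · rintro U ⟨x, r, hr, hne, rfl⟩
      have hcompl : (Metric.ball x r)ᶜ = (Metric.closedBall x r)ᶜ := by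
        ext y
        simp only [Set.mem_compl_iff, Metric.mem_ball, Metric.mem_closedBall, not_lt, not_le]
        constructor
        · intro h
          refine lt_of_le_of_ne h ?_
          intro heq
          exact hne y heq.symm
        · exact le_of_lt
      refine ⟨?_, Metric.isOpen_ball⟩
      rw [← isOpen_compl_iff, hcompl]
      exact Metric.isClosed_closedBall.isOpen_compl
    · apply TopologicalSpace.isTopologicalBasis_of_isOpen_of_nhds
      · rintro U ⟨x, r, hr, hne, rfl⟩
        exact Metric.isOpen_ball
      · intro a u hau hu
        rcases Metric.isOpen_iff.mp hu a hau with ⟨ε, hε, hball⟩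
        rcases key ε hε with ⟨r, hr, hrε, hrD⟩
        refine ⟨Metric.ball a r, ⟨a, r, hr, ?_, rfl⟩, Metric.mem_ball_self hr,
          (Metric.ball_subset_ball hrε.le).trans hball⟩
        intro y heq
        exact hrD (heq ▸ Set.mem_image2_of_mem y.2 a.2)
end

section
/- Every connected economically metrizable space is nonseparably connected: every connected separable subspace is a singleton. -/
universe u

/-- A distance function on a topological space is an economical metric if for every
infinite subset `A`, `|d(A × A)| ≤ dens A`. -/
def IsEconomicalMetric {X : Type u} [TopologicalSpace X] (d : X → X → ℝ) : Prop :=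
  ∀ A : Set X, A.Infinite →
    Cardinal.lift.{u} (Cardinal.mk (Set.image2 d A A)) ≤ dens A

/-- Every connected economically metrizable space is nonseparably connected:
every connected separable subspace is a singleton. -/
theorem connected_economically_metrizable_nonseparably_connected
    {X : Type u} [t : TopologicalSpace X] [ConnectedSpace X]
    (h : ∃ m : MetricSpace X, m.toUniformSpace.toTopologicalSpace = t ∧
      IsEconomicalMetric m.dist)
    (A : Set X) (hconn : IsConnected A) (hsep : TopologicalSpace.SeparableSpace A) :
    ∃ a : X, A = {a} := by
  obtain ⟨m, hm, hecon⟩ := h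
  subst hm
  letI : MetricSpace X := m
  rcases hconn.nonempty with ⟨a0, ha0⟩
  by_cases hsub : A.Subsingleton
  · exact ⟨a0, hsub.eq_singleton_of_mem ha0⟩
  exfalso
  rw [Set.not_subsingleton_iff] at hsub
  obtain ⟨a, ha, b, hb, hab⟩ := hsub
  have hr : 0 < dist a b := dist_pos.mpr hab
  have hf : Continuous fun x : X => dist a x := continuous_const.dist continuous_id
  have himg : IsConnected ((fun x : X => dist a x) '' A) := hconn.image _ hf.continuousOn
  have hIcc : Set.Icc 0 (dist a b) ⊆ (fun x : X => dist a x) '' A := by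
    apply himg.isPreconnected.Icc_subset
    · exact ⟨a, ha, by simp⟩
    · exact ⟨b, hb, rfl⟩
  have hsubim : (fun x : X => dist a x) '' A ⊆ Set.image2 m.dist A A := by
    rintro _ ⟨x, hx, rfl⟩
    exact ⟨a, ha, x, hx, rfl⟩
  have hAinf : A.Infinite := by
    have h1 : ((fun x : X => dist a x) '' A).Infinite :=
      (Set.Icc_infinite hr).mono hIcc
    exact Set.Infinite.of_image _ h1
  have hcont : Cardinal.continuum ≤ Cardinal.mk (Set.image2 m.dist A A) := by
    calc Cardinal.continuum = Cardinal.mk (Set.Icc (0:ℝ) (dist a b)) :=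
          (Cardinal.mk_Icc_real hr).symm
      _ ≤ _ := Cardinal.mk_le_mk_of_subset (hIcc.trans hsubim)
  obtain ⟨s, hsc, hsd⟩ := TopologicalSpace.exists_countable_dense A
  have hDsub : (Subtype.val '' s : Set X) ⊆ A := by
    rintro _ ⟨x, _, rfl⟩; exact x.2
  have hDdense : A ⊆ closure (Subtype.val '' s : Set X) := by
    intro x hx
    have hmem : (⟨x, hx⟩ : A) ∈ closure s := by rw [hsd.closure_eq]; trivial
    exact closure_subtype.mp hmem
  have hdA : dens A ≤ Cardinal.aleph0 := by
    have h2 := ciInf_le' (fun D : {D : Set X // D ⊆ A ∧ A ⊆ closure D} => Cardinal.mk D.1)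
      ⟨Subtype.val '' s, hDsub, hDdense⟩
    refine le_trans h2 ?_
    have : Countable (Subtype.val '' s : Set X) := (hsc.image _).to_subtype
    exact Cardinal.mk_le_aleph0_iff.mpr this
  have h3 := hecon A hAinf
  have h4 : Cardinal.continuum ≤ dens A := by
    have := (Cardinal.lift_le.mpr hcont).trans h3
    rwa [Cardinal.lift_continuum] at this
  exact absurd (h4.trans hdA) (not_le.mpr Cardinal.aleph0_lt_continuum)
end

section
/- For a metrizable space X, if every continuous real-valued function f on X satisfies |f(A)| ≤ dens(A) for every subspace A ⊂ X, then min{|A|, 𝔠} ≤ dens(A) for every subspace A ⊂ X. -/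
universe u

open Cardinal Set

/-- Pick a real in an interval avoiding a small set. -/
lemma pick_avoid (s : Set ℝ) (hs : Cardinal.mk s < Cardinal.continuum)
    {a b : ℝ} (hab : a < b) : ∃ r ∈ Set.Ioo a b, r ∉ s := by
  by_contra hcon
  push_neg at hcon
  have hsub : Set.Ioo a b ⊆ s := fun r hr => hcon r hr
  have := (Cardinal.mk_le_mk_of_subset hsub)
  rw [Cardinal.mk_Ioo_real hab] at this
  exact absurd this (not_le.mpr hs)

/-- A family of reals in `[1,2)` with pairwise ratios avoiding a given small set. -/
lemma ratio_free_family (Bad : Set ℝ) (hBad : Cardinal.mk Bad < Cardinal.continuum)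
    (ι : Type) (hι : Cardinal.mk ι < Cardinal.continuum) :
    ∃ c : ι → ℝ, (∀ i, 1 ≤ c i ∧ c i < 2) ∧ Function.Injective c ∧
      ∀ i j, i ≠ j → c i / c j ∉ Bad := by
  classical
  -- the subfield generated by log-image of Bad
  set S : Set ℝ := (fun t => Real.logb 2 t) '' Bad
  set K : Subfield ℝ := Subfield.closure S
  set G : AddSubgroup ℝ := K.toAddSubgroup
  have hKcard : Cardinal.mk K < Cardinal.continuum := by
    have h1 : Cardinal.mk K ≤ max (Cardinal.mk S) Cardinal.aleph0 :=
      Subfield.cardinalMk_closure_le_max _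
    have h2 : Cardinal.mk S ≤ Cardinal.mk Bad := Cardinal.mk_image_le
    have : max (Cardinal.mk S) Cardinal.aleph0 < Cardinal.continuum :=
      max_lt (lt_of_le_of_lt h2 hBad) (Cardinal.aleph0_lt_continuum)
    exact lt_of_le_of_lt h1 this
  -- quotient has full cardinality
  have hquot : Cardinal.mk ι ≤ Cardinal.mk (ℝ ⧸ G) := by
    by_contra hq
    push_neg at hq
    have hGQ : Cardinal.mk ℝ = Cardinal.mk ((ℝ ⧸ G) × G) :=
      Cardinal.mk_congr AddSubgroup.addGroupEquivQuotientProdAddSubgroup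
    have hGle : Cardinal.mk G < Cardinal.continuum := hKcard
    have hQle : Cardinal.mk (ℝ ⧸ G) < Cardinal.continuum := lt_of_lt_of_le hq hι.le
    have : Cardinal.mk ((ℝ ⧸ G) × G) < Cardinal.continuum := by
      rw [Cardinal.mk_prod, Cardinal.lift_id, Cardinal.lift_id]
      calc Cardinal.mk (ℝ ⧸ G) * Cardinal.mk G
          ≤ max (max (Cardinal.mk (ℝ ⧸ G)) (Cardinal.mk G)) ℵ₀ := Cardinal.mul_le_max _ _
        _ < Cardinal.continuum := max_lt (max_lt hQle hGle) Cardinal.aleph0_lt_continuum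
    have hcc : Cardinal.continuum ≤ Cardinal.mk ((ℝ ⧸ G) × G) := by
      rw [← hGQ, Cardinal.mk_real]
    exact absurd (lt_of_le_of_lt hcc this) (lt_irrefl _)
  obtain ⟨emb⟩ := hquot
  -- representatives
  set rep : ι → ℝ := fun i => Int.fract (Quotient.out (emb i))
  have hrep01 : ∀ i, 0 ≤ rep i ∧ rep i < 1 := fun i => ⟨Int.fract_nonneg _, Int.fract_lt_one _⟩
  have hint : ∀ (z : ℤ), (z : ℝ) ∈ G := by
    intro z
    have : ((z : ℝ)) ∈ K := by
      exact_mod_cast intCast_mem K z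
    exact this
  have hdiff : ∀ i j, rep i - rep j ∈ G → i = j := by
    intro i j hmem
    -- rep i - rep j = (out i - out j) - (⌊out i⌋ - ⌊out j⌋)
    have h1 : rep i - rep j
        = (Quotient.out (emb i) - Quotient.out (emb j))
          - ((⌊Quotient.out (emb i)⌋ : ℝ) - (⌊Quotient.out (emb j)⌋ : ℝ)) := by
      simp only [rep, Int.fract]; ring
    have h2 : (Quotient.out (emb i) - Quotient.out (emb j)) ∈ G := by
      have hz : ((⌊Quotient.out (emb i)⌋ : ℝ) - (⌊Quotient.out (emb j)⌋ : ℝ)) ∈ G := by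
        have := hint (⌊Quotient.out (emb i)⌋ - ⌊Quotient.out (emb j)⌋)
        push_cast at this ⊢
        convert this using 1
      have := AddSubgroup.add_mem G hmem hz
      rw [h1] at this
      simpa using this
    have : (emb i) = (emb j) := by
      have hi := QuotientAddGroup.out_eq' (emb i)
      have hj := QuotientAddGroup.out_eq' (emb j)
      rw [← hi, ← hj, QuotientAddGroup.eq]
      have h3 : -(Quotient.out (emb i) - Quotient.out (emb j)) ∈ G := AddSubgroup.neg_mem G h2
      rw [neg_sub] at h3
      rw [show -Quotient.out (emb i) + Quotient.out (emb j)
          = Quotient.out (emb j) - Quotient.out (emb i) by ring]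
      exact h3
    exact emb.injective this
  refine ⟨fun i => (2 : ℝ) ^ (rep i), fun i => ?_, ?_, ?_⟩
  · constructor
    · rw [show (1:ℝ) = (2:ℝ) ^ (0:ℝ) by simp]
      exact (Real.rpow_le_rpow_left_iff one_lt_two).mpr (hrep01 i).1
    · have := (Real.rpow_lt_rpow_left_iff (x := (2:ℝ)) one_lt_two).mpr (hrep01 i).2
      simpa using this
  · intro i j hij
    have : rep i = rep j := by
      have := congrArg (Real.logb 2) hij
      rwa [Real.logb_rpow (by norm_num) (by norm_num),
           Real.logb_rpow (by norm_num) (by norm_num)] at this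
    apply hdiff
    rw [this, sub_self]
    exact AddSubgroup.zero_mem G
  · intro i j hij hmem
    apply hij
    apply hdiff
    have hratio : (2:ℝ) ^ (rep i) / (2:ℝ) ^ (rep j) = (2:ℝ) ^ (rep i - rep j) :=
      (Real.rpow_sub (by norm_num) _ _).symm
    have : rep i - rep j ∈ S := by
      refine ⟨(2:ℝ) ^ (rep i) / (2:ℝ) ^ (rep j), hmem, ?_⟩
      show Real.logb 2 ((2:ℝ) ^ (rep i) / (2:ℝ) ^ (rep j)) = rep i - rep j
      rw [hratio]
      exact Real.logb_rpow (by norm_num) (by norm_num)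
    exact Subfield.subset_closure this

open Set

lemma clopen_indicator_continuous {α : Type*} [TopologicalSpace α] (U : Set α)
    (hU : IsClopen U) (c : ℝ) : Continuous (U.indicator fun _ => c) := by
  classical
  have : U.indicator (fun _ => c) = U.piecewise (fun _ => c) (fun _ => 0) := by
    funext x
    by_cases hx : x ∈ U <;> simp [Set.indicator, Set.piecewise, hx]
  rw [this]
  apply Continuous.piecewise
  · intro a ha
    rw [hU.frontier_eq] at ha
    exact absurd ha (Set.notMem_empty a)
  · exact continuous_const
  · exact continuous_const

/-- From a countable family of clopen sets, get a continuous real map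
whose fibers refine the family. -/
lemma exists_theta {α : Type*} [TopologicalSpace α] (U : ℕ → Set α)
    (hU : ∀ k, IsClopen (U k)) :
    ∃ θ : α → ℝ, Continuous θ ∧
      ∀ x y : α, θ x = θ y → ∀ k, (x ∈ U k ↔ y ∈ U k) := by
  classical
  set w : ℕ → ℝ := fun k => 2 * (1/3 : ℝ) ^ (k+1) with hw
  have hwpos : ∀ k, 0 < w k := fun k => by positivity
  set ψ : ℕ → α → ℝ := fun k => (U k).indicator (fun _ => w k) with hψ
  have hψcont : ∀ k, Continuous (ψ k) := fun k => clopen_indicator_continuous _ (hU k) _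
  have hψbound : ∀ k x, ‖ψ k x‖ ≤ w k := by
    intro k x
    by_cases hx : x ∈ U k <;>
      simp [hψ, Set.indicator, hx, abs_of_nonneg (hwpos k).le, (hwpos k).le]
  have hsumgeo : Summable (fun k : ℕ => (1/3 : ℝ) ^ k) :=
    summable_geometric_of_lt_one (by norm_num) (by norm_num)
  have hsumw : Summable w := by
    have : Summable (fun k : ℕ => (1/3 : ℝ) ^ (k+1)) := by
      simpa [Function.comp_def] using hsumgeo.comp_injective (add_left_injective 1)
    exact this.mul_left 2
  have hψsum : ∀ x, Summable (fun k => ψ k x) := by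
    intro x
    exact Summable.of_norm_bounded hsumw (fun k => hψbound k x)
  set θ : α → ℝ := fun x => ∑' k, ψ k x with hθ
  have hθcont : Continuous θ := continuous_tsum hψcont hsumw hψbound
  refine ⟨θ, hθcont, ?_⟩
  intro x y hxy
  intro k
  by_contra hk
  have hex : ∃ k, ¬(x ∈ U k ↔ y ∈ U k) := ⟨k, hk⟩
  set k₀ := Nat.find hex with hk₀def
  have hdiff0 : ¬(x ∈ U k₀ ↔ y ∈ U k₀) := Nat.find_spec hex
  have hagree : ∀ j < k₀, (x ∈ U j ↔ y ∈ U j) := by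
    intro j hjlt
    by_contra hne
    exact absurd (Nat.find_le hne) (not_le.mpr hjlt)
  set δ : ℕ → ℝ := fun k => ψ k x - ψ k y with hδ
  have hδsummable : Summable δ := (hψsum x).sub (hψsum y)
  have htsumδ : ∑' k, δ k = 0 := by
    have : ∑' k, δ k = θ x - θ y := Summable.tsum_sub (hψsum x) (hψsum y)
    rw [this, hxy, sub_self]
  -- split
  have hsplit : ∑' k, δ k = (∑ j ∈ Finset.range (k₀+1), δ j) + ∑' k, δ (k + (k₀+1)) :=
    (Summable.sum_add_tsum_nat_add (k₀+1) hδsummable).symm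
  have hδzero : ∀ j < k₀, δ j = 0 := by
    intro j hj
    have := hagree j hj
    by_cases hx : x ∈ U j
    · have hy : y ∈ U j := this.mp hx
      simp [hδ, hψ, Set.indicator, hx, hy]
    · have hy : y ∉ U j := fun hy => hx (this.mpr hy)
      simp [hδ, hψ, Set.indicator, hx, hy]
  have hhead : (∑ j ∈ Finset.range (k₀+1), δ j) = δ k₀ := by
    rw [Finset.sum_range_succ]
    rw [Finset.sum_eq_zero (fun j hj => hδzero j (Finset.mem_range.mp hj))]
    ring
  have hδnorm : ∀ j : ℕ, ‖δ j‖ ≤ w j := by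
    intro j
    by_cases hx : x ∈ U j <;> by_cases hy : y ∈ U j <;>
      simp [hδ, hψ, Set.indicator, hx, hy, abs_of_nonneg (hwpos j).le,
        abs_of_nonpos, neg_neg, (hwpos j).le]
  have hδk₀ : |δ k₀| = w k₀ := by
    by_cases hx : x ∈ U k₀
    · have hy : y ∉ U k₀ := by tauto
      simp [hδ, hψ, Set.indicator, hx, hy, abs_of_nonneg (hwpos k₀).le]
    · have hy : y ∈ U k₀ := by tauto
      simp [hδ, hψ, Set.indicator, hx, hy, abs_of_nonpos, (hwpos k₀).le]
  -- tail bound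
  have htail0 : Summable (fun k => δ (k + (k₀+1))) :=
    (summable_nat_add_iff (k₀+1)).mpr hδsummable
  have hwtail : Summable (fun k => w (k + (k₀+1))) :=
    (summable_nat_add_iff (k₀+1)).mpr hsumw
  have hwtailsum : ∑' k : ℕ, w (k + (k₀+1)) = (1/3 : ℝ)^(k₀+1) := by
    have h1 : ∀ k : ℕ, w (k + (k₀+1)) = 2 * (1/3 : ℝ)^(k₀+2) * (1/3 : ℝ)^k := by
      intro k
      rw [hw]
      simp only []
      rw [show k + (k₀+1) + 1 = (k₀+2) + k by ring, pow_add]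
      ring
    calc ∑' k : ℕ, w (k + (k₀+1)) = ∑' k : ℕ, 2 * (1/3 : ℝ)^(k₀+2) * (1/3 : ℝ)^k := by
          exact tsum_congr h1
      _ = 2 * (1/3 : ℝ)^(k₀+2) * ∑' k : ℕ, (1/3 : ℝ)^k := tsum_mul_left
      _ = 2 * (1/3 : ℝ)^(k₀+2) * (1 - 1/3)⁻¹ := by
          rw [tsum_geometric_of_lt_one (by norm_num) (by norm_num)]
      _ = (1/3 : ℝ)^(k₀+1) := by
          rw [pow_succ]
          ring
  have htailbound : |∑' k, δ (k + (k₀+1))| ≤ (1/3 : ℝ)^(k₀+1) := by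
    rw [← hwtailsum]
    calc |∑' k, δ (k + (k₀+1))| ≤ ∑' k, ‖δ (k + (k₀+1))‖ := by
          simpa using norm_tsum_le_tsum_norm (htail0.norm)
      _ ≤ ∑' k : ℕ, w (k + (k₀+1)) := Summable.tsum_le_tsum (fun k => hδnorm _) htail0.norm hwtail
  -- contradiction
  have hwk₀ : w k₀ = 2 * (1/3 : ℝ)^(k₀+1) := rfl
  have : (0:ℝ) = |δ k₀ + ∑' k, δ (k + (k₀+1))| := by
    rw [hsplit, hhead] at htsumδ
    rw [htsumδ, abs_zero]
  have hge : |δ k₀ + ∑' k, δ (k + (k₀+1))| ≥ |δ k₀| - |∑' k, δ (k + (k₀+1))| := by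
    have := abs_sub_abs_le_abs_sub (δ k₀) (-(∑' k, δ (k + (k₀+1))))
    simp only [abs_neg, sub_neg_eq_add] at this
    linarith [this]
  rw [hδk₀, hwk₀] at hge
  have hpos : (0:ℝ) < (1/3 : ℝ)^(k₀+1) := by positivity
  linarith [this, hge, htailbound]

open Set

section
variable {X : Type*} [MetricSpace X] {ι : Sort*}

lemma bddAbove_family (g : ι → X → ℝ) (hb : ∀ i x, g i x ≤ 2) (x : X) :
    BddAbove (insert 0 (Set.range fun i => g i x)) := by
  refine ⟨2, ?_⟩
  rintro t (rfl | ⟨i, rfl⟩)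
  · norm_num
  · exact hb i x

lemma sSup_family_lt (g : ι → X → ℝ) (K : ℝ) (hK : 0 ≤ K)
    (hg : ∀ i, ∀ x y : X, g i x ≤ g i y + K * dist x y)
    (hb : ∀ i x, g i x ≤ 2) (x y : X) :
    sSup (insert 0 (Set.range fun i => g i x))
      ≤ sSup (insert 0 (Set.range fun i => g i y)) + K * dist x y := by
  have hy0 : (0:ℝ) ≤ sSup (insert 0 (Set.range fun i => g i y)) :=
    le_csSup (bddAbove_family g hb y) (Set.mem_insert _ _)
  apply Real.sSup_le
  · rintro t (rfl | ⟨i, rfl⟩)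
    · have : 0 ≤ K * dist x y := mul_nonneg hK dist_nonneg
      linarith
    · have h1 : g i x ≤ g i y + K * dist x y := hg i x y
      have h2 : g i y ≤ sSup (insert 0 (Set.range fun i => g i y)) :=
        le_csSup (bddAbove_family g hb y) (Set.mem_insert_of_mem _ ⟨i, rfl⟩)
      linarith
  · have : 0 ≤ K * dist x y := mul_nonneg hK dist_nonneg
    linarith

lemma continuous_sSup_family (g : ι → X → ℝ) (K : ℝ) (hK : 0 ≤ K)
    (hg : ∀ i, ∀ x y : X, g i x ≤ g i y + K * dist x y)
    (hb : ∀ i x, g i x ≤ 2) :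
    Continuous (fun x => sSup (insert 0 (Set.range fun i => g i x))) := by
  apply Metric.continuous_iff.mpr
  intro x ε hε
  by_cases hK0 : K = 0
  · refine ⟨1, one_pos, fun y hy => ?_⟩
    have h1 := sSup_family_lt g K hK hg hb x y
    have h2 := sSup_family_lt g K hK hg hb y x
    rw [hK0] at h1 h2
    simp only [zero_mul, add_zero] at h1 h2
    have : sSup (insert 0 (Set.range fun i => g i y))
        = sSup (insert 0 (Set.range fun i => g i x)) := le_antisymm h2 h1
    rw [this]
    simpa using hε
  · have hKpos : 0 < K := lt_of_le_of_ne hK (Ne.symm hK0)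
    refine ⟨ε / K, by positivity, fun y hy => ?_⟩
    have h1 := sSup_family_lt g K hK hg hb x y
    have h2 := sSup_family_lt g K hK hg hb y x
    have hd : K * dist x y < ε := by
      calc K * dist x y < K * (ε / K) := by
            apply mul_lt_mul_of_pos_left _ hKpos
            rw [dist_comm x y]
            exact hy
        _ = ε := by field_simp
    have hd2 : K * dist y x < ε := by rwa [dist_comm y x]
    rw [Real.dist_eq, abs_lt]
    constructor <;> linarith

end

open Cardinal Set Metric

theorem aux_main {X : Type u} [MetricSpace X] (κ₀ : Cardinal.{0})
    (hκ : ℵ₀ ≤ κ₀) (hκc : κ₀ < Cardinal.continuum)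
    (M D : Set X) (hDM : D ⊆ M) (hdense : M ⊆ closure D) (hMclosed : IsClosed M)
    (hsmall : ∀ f : X → ℝ, Continuous f → Cardinal.mk (f '' M) ≤ κ₀)
    (hD : Cardinal.lift.{0} (Cardinal.mk D) ≤ Cardinal.lift.{u} κ₀) :
    Cardinal.lift.{0} (Cardinal.mk M) ≤ Cardinal.lift.{u} κ₀ := by
  classical
  rcases M.eq_empty_or_nonempty with hME | hMne
  · subst hME; simp
  have hDne : D.Nonempty := by
    rcases D.eq_empty_or_nonempty with hDE | hDne
    · exfalso
      obtain ⟨z, hz⟩ := hMne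
      have := hdense hz
      rw [hDE, closure_empty] at this
      exact this
    · exact hDne
  haveI : Nonempty ↥D := hDne.to_subtype
  -- index type
  set ι : Type := κ₀.ord.ToType with hι
  have hmkι : Cardinal.mk ι = κ₀ := Cardinal.mk_ord_toType κ₀
  haveI : Nonempty ι := by
    rw [← Cardinal.mk_ne_zero_iff, hmkι]
    intro h
    rw [h] at hκ
    exact absurd (lt_of_lt_of_le Cardinal.aleph0_pos (hκ.trans (le_of_eq rfl))) (by simp)
  obtain ⟨emb⟩ : Nonempty (↥D ↪ ι) := by
    rw [← Cardinal.lift_mk_le', hmkι]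
    exact hD
  set en : ι → X := fun i => (Function.invFun emb i : ↥D) with hen
  have hen_mem : ∀ i, en i ∈ D := fun i => (Function.invFun emb i).2
  have hen_surj : ∀ e ∈ D, ∃ i, en i = e := by
    intro e he
    obtain ⟨i, hi⟩ := Function.invFun_surjective emb.injective ⟨e, he⟩
    refine ⟨i, ?_⟩
    show ((Function.invFun emb i : ↥D) : X) = e
    rw [hi]
  -- scales
  set R : ℕ → ℝ := fun n => (1/2 : ℝ)^n with hR
  have hRpos : ∀ n, 0 < R n := fun n => by positivity
  -- the pieces
  set W : ℕ → ι → ℕ → Set X := fun n i m =>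
    {z | z ∈ M ∧ (dist z (en i) < R n * (1 - (1/2)^(m+1))) ∧ ∀ j, j < i → ¬(dist z (en j) < R n)}
    with hW
  have hWM : ∀ n i m, W n i m ⊆ M := fun n i m z hz => hz.1
  have hWdistR : ∀ n i m z, z ∈ W n i m → dist z (en i) < R n := by
    intro n i m z hz
    have h1 : R n * (1 - (1/2 : ℝ)^(m+1)) ≤ R n * 1 := by
      apply mul_le_mul_of_nonneg_left _ (hRpos n).le
      have : (0:ℝ) < (1/2 : ℝ)^(m+1) := by positivity
      linarith
    calc dist z (en i) < R n * (1 - (1/2)^(m+1)) := hz.2.1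
      _ ≤ R n * 1 := h1
      _ = R n := mul_one _
  -- cover
  have hcover : ∀ z ∈ M, ∀ n : ℕ, ∃ i m, z ∈ W n i m := by
    intro z hz n
    have hzD : z ∈ closure D := hdense hz
    have : ∃ e ∈ D, dist z e < R n := Metric.mem_closure_iff.mp hzD (R n) (hRpos n)
    obtain ⟨e, heD, hed⟩ := this
    obtain ⟨i₁, hi₁⟩ := hen_surj e heD
    have hSne : {i : ι | dist z (en i) < R n}.Nonempty := by
      refine ⟨i₁, ?_⟩
      show dist z (en i₁) < R n
      rw [hi₁]; exact hed
    set i₀ := (wellFounded_lt (α := ι)).min _ hSne with hi₀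
    have hi₀mem : dist z (en i₀) < R n := (wellFounded_lt (α := ι)).min_mem _ hSne
    have hi₀min : ∀ j, j < i₀ → ¬(dist z (en j) < R n) := by
      intro j hj hmem
      exact (wellFounded_lt (α := ι)).not_lt_min _ hmem hj
    -- choose m
    have hd : dist z (en i₀) < R n := hi₀mem
    have : ∃ m : ℕ, (1/2 : ℝ)^(m+1) < (R n - dist z (en i₀)) / R n := by
      obtain ⟨m, hm⟩ := exists_pow_lt_of_lt_one
        (show (0:ℝ) < (R n - dist z (en i₀)) / R n by
          apply div_pos (by linarith) (hRpos n)) (show (1/2 : ℝ) < 1 by norm_num)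
      refine ⟨m, lt_of_le_of_lt ?_ hm⟩
      apply pow_le_pow_of_le_one (by norm_num) (by norm_num)
      omega
    obtain ⟨m, hm⟩ := this
    refine ⟨i₀, m, hz, ?_, hi₀min⟩
    have h5 : (1/2 : ℝ)^(m+1) * R n < (R n - dist z (en i₀)) := by
      have := (lt_div_iff₀ (hRpos n)).mp hm
      linarith
    nlinarith [hRpos n]
  -- gap
  have hgap : ∀ n i i' m, i ≠ i' → ∀ z ∈ W n i m, ∀ z' ∈ W n i' m,
      R n * (1/2)^(m+1) ≤ dist z z' := by
    have key : ∀ n i i' m, i < i' → ∀ z ∈ W n i m, ∀ z' ∈ W n i' m,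
        R n * (1/2)^(m+1) ≤ dist z z' := by
      intro n i i' m hii' z hz z' hz'
      have h1 : ¬(dist z' (en i) < R n) := hz'.2.2 i hii'
      push_neg at h1
      have h2 : dist z (en i) < R n * (1 - (1/2)^(m+1)) := hz.2.1
      have h3 : dist z' (en i) ≤ dist z' z + dist z (en i) := dist_triangle _ _ _
      have h4 : dist z' z = dist z z' := dist_comm _ _
      nlinarith [hRpos n]
    intro n i i' m hne z hz z' hz'
    rcases lt_or_gt_of_ne hne with h | h
    · exact key n i i' m h z hz z' hz'
    · rw [dist_comm]
      exact key n i' i m h z' hz' z hz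
  -- diameter
  have hdiam : ∀ n i m, ∀ z ∈ W n i m, ∀ z' ∈ W n i m, dist z z' < 2 * R n := by
    intro n i m z hz z' hz'
    calc dist z z' ≤ dist z (en i) + dist z' (en i) := dist_triangle_right _ _ _
      _ < R n + R n := add_lt_add (hWdistR n i m z hz) (hWdistR n i m z' hz')
      _ = 2 * R n := by ring
  -- half-width of bump support
  set ζ : ℕ → ℕ → ℝ := fun n m => R n * (1/2)^(m+2) with hζ
  have hζpos : ∀ n m, 0 < ζ n m := fun n m => by positivity
  have hζ2 : ∀ n m, 2 * ζ n m = R n * (1/2)^(m+1) := by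
    intro n m
    show 2 * (R n * (1/2)^(m+2)) = R n * (1/2)^(m+1)
    rw [show m+2 = (m+1)+1 by ring, pow_succ]
    ring
  have hζleR : ∀ n m, ζ n m ≤ R n / 4 := by
    intro n m
    rw [hζ]
    have h1 : (1/2 : ℝ)^(m+2) ≤ (1/2)^2 := by
      apply pow_le_pow_of_le_one (by norm_num) (by norm_num)
      omega
    nlinarith [hRpos n]
  -- bump function
  set bump : ℕ → ℕ → ℝ → ℝ := fun n m t => max 0 (1 - t / ζ n m) with hbump
  have hbump_nonneg : ∀ n m t, 0 ≤ bump n m t := fun n m t => le_max_left _ _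
  have hbump_le_one : ∀ n m t, 0 ≤ t → bump n m t ≤ 1 := by
    intro n m t ht
    apply max_le (by norm_num)
    have : 0 ≤ t / ζ n m := div_nonneg ht (hζpos n m).le
    linarith
  have hbump_zero : ∀ n m t, ζ n m ≤ t → bump n m t = 0 := by
    intro n m t ht
    apply max_eq_left
    have h1 : 1 ≤ t / ζ n m := (one_le_div (hζpos n m)).mpr ht
    linarith
  have hbump_one : ∀ n m, bump n m 0 = 1 := by
    intro n m
    rw [hbump]
    simp
  have hbump_pos_lt : ∀ n m t, 0 < bump n m t → t < ζ n m := by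
    intro n m t h
    by_contra hc
    push_neg at hc
    rw [hbump_zero n m t hc] at h
    exact lt_irrefl _ h
  have hbump_lip : ∀ n m a b, bump n m a ≤ bump n m b + |a - b| / ζ n m := by
    intro n m a b
    rw [hbump]
    simp only []
    have h1 : (1 - a / ζ n m) ≤ (1 - b / ζ n m) + |a - b| / ζ n m := by
      have h2 : b - a ≤ |a - b| := by
        rw [abs_sub_comm]
        exact le_abs_self _
      have h3 : (b - a) / ζ n m ≤ |a - b| / ζ n m := by
        gcongr
      have : (1 - a / ζ n m) - (1 - b / ζ n m) = (b - a) / ζ n m := by ring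
      linarith
    have h0 : (0:ℝ) ≤ max 0 (1 - b / ζ n m) + |a - b| / ζ n m := by
      have := le_max_left (0:ℝ) (1 - b / ζ n m)
      have := abs_nonneg (a - b)
      have := (hζpos n m).le
      positivity
    apply max_le h0
    calc (1 - a / ζ n m) ≤ (1 - b / ζ n m) + |a - b| / ζ n m := h1
      _ ≤ max 0 (1 - b / ζ n m) + |a - b| / ζ n m := by
          have := le_max_right (0:ℝ) (1 - b / ζ n m)
          linarith
  -- value sets are small
  have hinfD_cont : ∀ (s : Set X), Continuous (fun x : X => infDist x s) :=
    fun s => (lipschitz_infDist_pt s).continuous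
  have hVals : ∀ n (i : ι) m, Cardinal.mk ((fun x : X => infDist x (W n i m)) '' M) ≤ κ₀ :=
    fun n i m => hsmall _ (hinfD_cont _)
  -- bad ratios
  set Bad : Set ℝ := ⋃ (p : ℕ × ℕ × ι),
    (fun t => bump p.1 p.2.1 t) '' ((fun x : X => infDist x (W p.1 p.2.2 p.2.1)) '' M) with hBad
  have hBadcard : Cardinal.mk Bad ≤ κ₀ := by
    have h1 := Cardinal.mk_iUnion_le (fun p : ℕ × ℕ × ι =>
      (fun t => bump p.1 p.2.1 t) '' ((fun x : X => infDist x (W p.1 p.2.2 p.2.1)) '' M))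
    have h2 : Cardinal.mk (ℕ × ℕ × ι) = κ₀ := by
      simp only [Cardinal.mk_prod, Cardinal.lift_id, Cardinal.mk_denumerable, hmkι]
      rw [Cardinal.aleph0_mul_eq hκ, Cardinal.aleph0_mul_eq hκ]
    have h3 : (⨆ p : ℕ × ℕ × ι, Cardinal.mk
        ((fun t => bump p.1 p.2.1 t) '' ((fun x : X => infDist x (W p.1 p.2.2 p.2.1)) '' M))) ≤ κ₀ := by
      apply ciSup_le'
      intro p
      exact le_trans Cardinal.mk_image_le (hVals p.1 p.2.2 p.2.1)
    calc Cardinal.mk Bad ≤ _ := h1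
      _ ≤ κ₀ * κ₀ := by
          rw [h2]
          exact mul_le_mul' (le_refl _) h3
      _ = κ₀ := Cardinal.mul_eq_self hκ
  -- ratio-free coefficients
  obtain ⟨c, hc12, hcinj, hcratio⟩ := ratio_free_family Bad (lt_of_le_of_lt hBadcard hκc) ι
    (by rw [hmkι]; exact hκc)
  -- the functions φ
  set g : (n m : ℕ) → {i : ι // (W n i m).Nonempty} → X → ℝ :=
    fun n m i x => c i.1 * bump n m (infDist x (W n i m)) with hg
  have hgb : ∀ n m (i : {i : ι // (W n i m).Nonempty}) x, g n m i x ≤ 2 := by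
    intro n m i x
    have h1 : bump n m (infDist x (W n i.1 m)) ≤ 1 := hbump_le_one _ _ _ (infDist_nonneg)
    have h2 : 0 ≤ bump n m (infDist x (W n i.1 m)) := hbump_nonneg _ _ _
    show c i.1 * bump n m (infDist x (W n i.1 m)) ≤ 2
    nlinarith [(hc12 i.1).1, (hc12 i.1).2]
  have hgnonneg : ∀ n m (i : {i : ι // (W n i m).Nonempty}) x, 0 ≤ g n m i x := by
    intro n m i x
    have h2 := hbump_nonneg n m (infDist x (W n i.1 m))
    show 0 ≤ c i.1 * bump n m (infDist x (W n i.1 m))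
    nlinarith [(hc12 i.1).1]
  have hglip : ∀ n m (i : {i : ι // (W n i m).Nonempty}) (x y : X),
      g n m i x ≤ g n m i y + (2 / ζ n m) * dist x y := by
    intro n m i x y
    have hb := hbump_lip n m (infDist x (W n i m)) (infDist y (W n i m))
    have hinf : |infDist x (W n i m) - infDist y (W n i m)| ≤ dist x y := by
      have := (lipschitz_infDist_pt (W n i m)).dist_le_mul x y
      rwa [Real.dist_eq, NNReal.coe_one, one_mul] at this
    have h1 : bump n m (infDist x (W n i m))
        ≤ bump n m (infDist y (W n i m)) + dist x y / ζ n m := by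
      apply le_trans hb
      have : |infDist x (W n i m) - infDist y (W n i m)| / ζ n m ≤ dist x y / ζ n m := by
        gcongr
      linarith
    have hc1 := (hc12 i.1).1
    have hc2 := (hc12 i.1).2
    have hbnn := hbump_nonneg n m (infDist y (W n i m))
    have hd0 : 0 ≤ dist x y / ζ n m := div_nonneg dist_nonneg (hζpos n m).le
    calc g n m i x = c i.1 * bump n m (infDist x (W n i m)) := rfl
      _ ≤ c i.1 * (bump n m (infDist y (W n i m)) + dist x y / ζ n m) := by nlinarith
      _ ≤ c i.1 * bump n m (infDist y (W n i m)) + 2 * (dist x y / ζ n m) := by nlinarith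
      _ = g n m i y + (2 / ζ n m) * dist x y := by
          rw [hg]
          ring
  set φ : ℕ → ℕ → X → ℝ :=
    fun n m x => sSup (insert 0 (Set.range fun i : {i : ι // (W n i m).Nonempty} => g n m i x))
    with hφ
  have hφcont : ∀ n m, Continuous (φ n m) := by
    intro n m
    apply continuous_sSup_family (g n m) (2 / ζ n m) (by positivity)
    · exact fun i x y => hglip n m i x y
    · exact fun i x => hgb n m i x
  -- exact value on own piece
  have hbdd : ∀ n m x, BddAbove (insert 0 (Set.range fun i : {i : ι // (W n i m).Nonempty} => g n m i x)) := by
    intro n m x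
    refine ⟨2, ?_⟩
    rintro t (rfl | ⟨i, rfl⟩)
    · norm_num
    · exact hgb n m i x
  have hexact : ∀ n m (i : ι) (x : X), x ∈ W n i m → φ n m x = c i := by
    intro n m i x hx
    have hne : (W n i m).Nonempty := ⟨x, hx⟩
    have hmem : c i ∈ insert 0 (Set.range fun i' : {i' : ι // (W n i' m).Nonempty} => g n m i' x) := by
      apply Set.mem_insert_of_mem
      refine ⟨⟨i, hne⟩, ?_⟩
      show c i * bump n m (infDist x (W n i m)) = c i
      rw [infDist_zero_of_mem hx, hbump_one]
      ring
    have hub : ∀ t ∈ insert 0 (Set.range fun i' : {i' : ι // (W n i' m).Nonempty} => g n m i' x),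
        t ≤ c i := by
      rintro t (rfl | ⟨i', rfl⟩)
      · linarith [(hc12 i).1]
      · by_cases hii : i'.1 = i
        · show c i'.1 * bump n m (infDist x (W n i'.1 m)) ≤ c i
          rw [hii]
          have h1 : bump n m (infDist x (W n i m)) ≤ 1 := hbump_le_one _ _ _ infDist_nonneg
          have h2 : 0 ≤ bump n m (infDist x (W n i m)) := hbump_nonneg _ _ _
          nlinarith [(hc12 i).1]
        · -- far piece: bump is 0
          have hfar : ζ n m ≤ infDist x (W n i'.1 m) := by
            by_contra hcl
            push_neg at hcl
            obtain ⟨w, hw, hwd⟩ := (infDist_lt_iff i'.2).mp hcl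
            have hg2 := hgap n i'.1 i m hii w hw x hx
            rw [dist_comm w x] at hg2
            have h2ζ := hζ2 n m
            linarith [hζpos n m]
          show c i'.1 * bump n m (infDist x (W n i'.1 m)) ≤ c i
          rw [hbump_zero n m _ hfar]
          linarith [(hc12 i).1]
    exact IsGreatest.csSup_eq ⟨hmem, hub⟩
  -- value elsewhere differs
  have hdiffer : ∀ n m (i : ι) (x y : X), x ∈ W n i m → y ∈ M → 8 * R n ≤ dist x y →
      φ n m y ≠ c i := by
    intro n m i x y hx hy hdxy heq
    have hne : (W n i m).Nonempty := ⟨x, hx⟩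
    -- at most one active index
    by_cases hact : ∃ i' : {i' : ι // (W n i' m).Nonempty}, 0 < bump n m (infDist y (W n i'.1 m))
    · obtain ⟨i', hi'⟩ := hact
      have huniq : ∀ i'' : {i'' : ι // (W n i'' m).Nonempty},
          i'' ≠ i' → bump n m (infDist y (W n i''.1 m)) = 0 := by
        intro i'' hne''
        by_contra hnz
        have hpos : 0 < bump n m (infDist y (W n i''.1 m)) := by
          rcases lt_or_eq_of_le (hbump_nonneg n m (infDist y (W n i''.1 m))) with h | h
          · exact h
          · exact absurd h.symm hnz
        have ht1 : infDist y (W n i'.1 m) < ζ n m := hbump_pos_lt _ _ _ hi'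
        have ht2 : infDist y (W n i''.1 m) < ζ n m := hbump_pos_lt _ _ _ hpos
        obtain ⟨w1, hw1, hwd1⟩ := (infDist_lt_iff i'.2).mp ht1
        obtain ⟨w2, hw2, hwd2⟩ := (infDist_lt_iff i''.2).mp ht2
        have hii : i''.1 ≠ i'.1 := fun hcontra => hne'' (Subtype.ext hcontra)
        have hg2 := hgap n i''.1 i'.1 m hii w2 hw2 w1 hw1
        have htri : dist w2 w1 ≤ dist w2 y + dist y w1 := dist_triangle _ _ _
        rw [dist_comm w2 y] at htri
        have h2ζ := hζ2 n m
        linarith [hζpos n m]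
      -- sSup equals the single active term
      have hval : φ n m y = g n m i' y := by
        apply IsGreatest.csSup_eq
        constructor
        · exact Set.mem_insert_of_mem _ ⟨i', rfl⟩
        · rintro t (rfl | ⟨i'', rfl⟩)
          · exact hgnonneg n m i' y
          · by_cases h : i'' = i'
            · rw [h]
            · show c i''.1 * bump n m (infDist y (W n i''.1 m)) ≤ g n m i' y
              rw [huniq i'' h]
              have := hgnonneg n m i' y
              linarith
      rw [hval] at heq
      -- case split on i' = i
      by_cases hii : i'.1 = i
      · -- impossible: y too far from the piece of x
        have ht1 : infDist y (W n i'.1 m) < ζ n m := hbump_pos_lt _ _ _ hi'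
        obtain ⟨w, hw, hwd⟩ := (infDist_lt_iff i'.2).mp ht1
        rw [hii] at hw
        have hdw : dist x w < 2 * R n := hdiam n i m x hx w hw
        have htri : dist x y ≤ dist x w + dist w y := dist_triangle _ _ _
        rw [dist_comm w y] at htri
        have hζR := hζleR n m
        have hR0 := hRpos n
        linarith
      · -- ratio argument
        have ht0 : 0 ≤ infDist y (W n i'.1 m) := infDist_nonneg
        rcases eq_or_lt_of_le ht0 with h0 | h0
        · -- infDist = 0 : bump = 1, c i' = c i, contradiction with injectivity
          have : g n m i' y = c i'.1 := by
            show c i'.1 * bump n m (infDist y (W n i'.1 m)) = c i'.1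
            rw [← h0, hbump_one]
            ring
          rw [this] at heq
          exact hii (hcinj heq)
        · -- 0 < infDist : ratio in Bad
          have hbpos : 0 < bump n m (infDist y (W n i'.1 m)) := hi'
          have hratio : c i / c i'.1 = bump n m (infDist y (W n i'.1 m)) := by
            have hc0 : (0:ℝ) < c i'.1 := lt_of_lt_of_le one_pos (hc12 i'.1).1
            field_simp
            rw [mul_comm]
            exact heq.symm.trans (mul_comm _ _)
          have hmemBad : c i / c i'.1 ∈ Bad := by
            rw [hBad]
            apply Set.mem_iUnion.mpr
            refine ⟨⟨n, m, i'.1⟩, ?_⟩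
            rw [hratio]
            exact ⟨infDist y (W n i'.1 m), ⟨y, hy, rfl⟩, rfl⟩
          exact hcratio i i'.1 (fun hcc => hii hcc.symm) hmemBad
    · -- no active index: sSup = 0 < c i
      push_neg at hact
      have hval : φ n m y = 0 := by
        apply IsGreatest.csSup_eq
        constructor
        · exact Set.mem_insert _ _
        · rintro t (rfl | ⟨i'', rfl⟩)
          · exact le_refl _
          · have h1 : bump n m (infDist y (W n i''.1 m)) = 0 := by
              have h2 := hact i''
              have h3 := hbump_nonneg n m (infDist y (W n i''.1 m))
              linarith
            show c i''.1 * bump n m (infDist y (W n i''.1 m)) ≤ 0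
            rw [h1]
            ring_nf
            exact le_refl _
      rw [hval] at heq
      linarith [(hc12 i).1]
  -- the combined map
  set pairE : ℕ ≃ ℕ × ℕ := (Denumerable.eqv (ℕ × ℕ)).symm with hpairE
  set Φ : X → ℕ → ℝ := fun x k => φ (pairE k).1 (pairE k).2 x with hΦ
  have hΦcont : Continuous Φ := continuous_pi (fun k => hφcont _ _)
  have hΦinj : ∀ x ∈ M, ∀ y ∈ M, Φ x = Φ y → x = y := by
    intro x hx y hy hxy
    by_contra hne
    have hd : 0 < dist x y := dist_pos.mpr hne
    obtain ⟨n, hn⟩ := exists_pow_lt_of_lt_one (show (0:ℝ) < dist x y / 8 by linarith)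
      (show (1/2 : ℝ) < 1 by norm_num)
    have hRd : 8 * R n ≤ dist x y := by
      have : R n < dist x y / 8 := hn
      linarith
    obtain ⟨i, m, him⟩ := hcover x hx n
    have h1 : φ n m x = c i := hexact n m i x him
    have h2 : φ n m y ≠ c i := hdiffer n m i x y him hy hRd
    have h3 : φ n m x = φ n m y := by
      have := congrFun hxy (pairE.symm (n, m))
      simpa [hΦ, Equiv.apply_symm_apply] using this
    rw [← h3, h1] at h2
    exact h2 rfl
  -- Stage 2: the image is a second countable metrizable space
  letI MS : MetricSpace (ℕ → ℝ) := TopologicalSpace.metrizableSpaceMetric (ℕ → ℝ)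
  set Y : Set (ℕ → ℝ) := Φ '' M with hY
  have hYne : Y.Nonempty := hMne.image _
  haveI : Nonempty ↥Y := hYne.to_subtype
  obtain ⟨u, hu⟩ : ∃ u : ℕ → ↥Y, DenseRange u := TopologicalSpace.exists_dense_seq ↥Y
  -- radii avoiding the value sets
  have hdistcont : ∀ j : ℕ, Continuous (fun x : X => dist (Φ x) ((u j : ↥Y) : ℕ → ℝ)) := by
    intro j
    exact Continuous.dist hΦcont continuous_const
  have hradex : ∀ j s : ℕ, ∃ r, r ∈ Set.Ioo ((1/2 : ℝ)^s) (2 * (1/2 : ℝ)^s) ∧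
      r ∉ (fun x : X => dist (Φ x) ((u j : ↥Y) : ℕ → ℝ)) '' M := by
    intro j s
    apply pick_avoid
    · exact lt_of_le_of_lt (hsmall _ (hdistcont j)) hκc
    · have : (0:ℝ) < (1/2 : ℝ)^s := by positivity
      linarith
  choose rad hrad1 hrad2 using hradex
  -- the clopen sets
  set U : ℕ → Set ↥Y := fun k =>
    {y : ↥Y | dist (y : ℕ → ℝ) ((u (pairE k).1 : ↥Y) : ℕ → ℝ) < rad (pairE k).1 (pairE k).2}
    with hU
  have hYdist : ∀ (y : ↥Y) (j : ℕ), dist (y : ℕ → ℝ) ((u j : ↥Y) : ℕ → ℝ)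
      ∈ (fun x : X => dist (Φ x) ((u j : ↥Y) : ℕ → ℝ)) '' M := by
    rintro ⟨y, hy⟩ j
    obtain ⟨x, hxM, rfl⟩ := hy
    exact ⟨x, hxM, rfl⟩
  have hUclopen : ∀ k, IsClopen (U k) := by
    intro k
    constructor
    · -- closed: equals preimage of Iic
      have : U k = (fun y : ↥Y => dist (y : ℕ → ℝ) ((u (pairE k).1 : ↥Y) : ℕ → ℝ)) ⁻¹'
          (Set.Iic (rad (pairE k).1 (pairE k).2)) := by
        ext y
        simp only [hU, Set.mem_setOf_eq, Set.mem_preimage, Set.mem_Iic]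
        constructor
        · exact le_of_lt
        · intro hle
          rcases lt_or_eq_of_le hle with h | h
          · exact h
          · exact absurd (h ▸ hYdist y (pairE k).1) (hrad2 (pairE k).1 (pairE k).2)
      rw [this]
      exact IsClosed.preimage (Continuous.dist continuous_subtype_val continuous_const) isClosed_Iic
    · exact IsOpen.preimage (Continuous.dist continuous_subtype_val continuous_const) isOpen_Iio
  have hUsep : ∀ x' y' : ↥Y, x' ≠ y' → ∃ k, x' ∈ U k ∧ y' ∉ U k := by
    intro x' y' hne
    have hd : 0 < dist x' y' := dist_pos.mpr hne
    obtain ⟨s, hs⟩ := exists_pow_lt_of_lt_one (show (0:ℝ) < dist x' y' / 4 by linarith)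
      (show (1/2 : ℝ) < 1 by norm_num)
    obtain ⟨j, hj⟩ := Metric.denseRange_iff.mp hu x' ((1/2 : ℝ)^s) (by positivity)
    refine ⟨pairE.symm (j, s), ?_, ?_⟩
    · show dist (x' : ℕ → ℝ) ((u (pairE (pairE.symm (j,s))).1 : ↥Y) : ℕ → ℝ)
        < rad (pairE (pairE.symm (j,s))).1 (pairE (pairE.symm (j,s))).2
      rw [Equiv.apply_symm_apply]
      have h1 : dist (x' : ℕ → ℝ) ((u j : ↥Y) : ℕ → ℝ) = dist x' (u j) := rfl
      have h2 := (hrad1 j s).1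
      rw [h1]
      linarith [hj]
    · show ¬(dist (y' : ℕ → ℝ) ((u (pairE (pairE.symm (j,s))).1 : ↥Y) : ℕ → ℝ)
        < rad (pairE (pairE.symm (j,s))).1 (pairE (pairE.symm (j,s))).2)
      rw [Equiv.apply_symm_apply]
      push_neg
      have h1 : dist (y' : ℕ → ℝ) ((u j : ↥Y) : ℕ → ℝ) = dist y' (u j) := rfl
      have h2 := (hrad1 j s).2
      have htri : dist x' y' ≤ dist x' (u j) + dist (u j) y' := dist_triangle _ _ _
      rw [h1]
      have h3 : dist y' (u j) = dist (u j) y' := dist_comm _ _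
      rw [h3]
      linarith [hj, hs]
  obtain ⟨θ, hθcont, hθfib⟩ := exists_theta U hUclopen
  have hθinj : Function.Injective θ := by
    intro x' y' hxy
    by_contra hne
    obtain ⟨k, hk1, hk2⟩ := hUsep x' y' hne
    exact hk2 ((hθfib x' y' hxy k).mp hk1)
  -- Tietze extension
  haveI : NormalSpace X := inferInstance
  set f₀ : C(↥M, ℝ) := ⟨fun z => θ ⟨Φ z.1, ⟨z.1, z.2, rfl⟩⟩, by
    apply hθcont.comp
    apply Continuous.subtype_mk
    exact hΦcont.comp continuous_subtype_val⟩ with hf₀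
  obtain ⟨F, hF⟩ := ContinuousMap.exists_restrict_eq hMclosed f₀
  have hFval : ∀ z : ↥M, F z.1 = θ ⟨Φ z.1, ⟨z.1, z.2, rfl⟩⟩ := by
    intro z
    have := congrFun (congrArg (fun q : C(↥M, ℝ) => (q : ↥M → ℝ)) hF) z
    exact this
  have hFsmall : Cardinal.mk ((F : X → ℝ) '' M) ≤ κ₀ := hsmall F F.continuous
  -- injection from M into the image
  have hinjM : Function.Injective (fun z : ↥M => (⟨F z.1, ⟨z.1, z.2, rfl⟩⟩ :
      ↥((F : X → ℝ) '' M))) := by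
    intro z z' hzz
    have h1 : F z.1 = F z'.1 := congrArg Subtype.val hzz
    rw [hFval z, hFval z'] at h1
    have h2 := hθinj h1
    have h3 : Φ z.1 = Φ z'.1 := congrArg Subtype.val h2
    exact Subtype.ext (hΦinj z.1 z.2 z'.1 z'.2 h3)
  have : Cardinal.lift.{0} (Cardinal.mk ↥M) ≤ Cardinal.lift.{u} (Cardinal.mk ↥((F : X → ℝ) '' M)) :=
    Cardinal.lift_mk_le'.mpr ⟨⟨_, hinjM⟩⟩
  exact le_trans this (Cardinal.lift_le.mpr hFsmall)

/-- If `X` is metrizable and every continuous real-valued function `f` on `X`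
satisfies `|f(A)| ≤ dens A` for all subspaces `A`, then `min {|A|, 𝔠} ≤ dens A`
for every subspace `A ⊆ X`. -/
theorem small_images_implies_min_card_le_density
    {X : Type u} [TopologicalSpace X] [TopologicalSpace.MetrizableSpace X]
    (h : ∀ f : X → ℝ, Continuous f → ∀ A : Set X,
      Cardinal.lift.{u} (Cardinal.mk (f '' A)) ≤ dens A)
    (A : Set X) :
    min (Cardinal.mk A) Cardinal.continuum ≤ dens A := by
  classical
  by_contra hcon
  rw [not_le] at hcon
  obtain ⟨hA, hc⟩ := lt_min_iff.mp hcon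
  letI : MetricSpace X := TopologicalSpace.metrizableSpaceMetric X
  -- attain the density by some witness D
  haveI hne : Nonempty {D : Set X // D ⊆ A ∧ A ⊆ closure D} :=
    ⟨⟨A, subset_refl A, subset_closure⟩⟩
  have hattain : ∃ D : {D : Set X // D ⊆ A ∧ A ⊆ closure D},
      Cardinal.mk D.1 = dens A := by
    have h1 : dens A ∈ Set.range (fun D : {D : Set X // D ⊆ A ∧ A ⊆ closure D} =>
        Cardinal.mk D.1) := csInf_mem (Set.range_nonempty _)
    obtain ⟨D, hD⟩ := h1
    exact ⟨D, hD⟩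
  obtain ⟨⟨D, hDA, hAD⟩, hmkD⟩ := hattain
  -- finite density case
  by_cases hfin : Cardinal.mk D < Cardinal.aleph0
  · have hDfin : D.Finite := by
      rwa [Cardinal.lt_aleph0_iff_set_finite] at hfin
    have hDclosed : IsClosed D := hDfin.isClosed
    have hsub : A ⊆ D := by
      intro a ha
      have := hAD ha
      rwa [hDclosed.closure_eq] at this
    have : Cardinal.mk A ≤ dens A := le_trans (Cardinal.mk_le_mk_of_subset hsub)
      (le_of_eq hmkD)
    exact absurd (lt_of_lt_of_le hA this) (lt_irrefl _)
  push_neg at hfin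
  -- realside cardinal
  have hlift : dens A ≤ Cardinal.lift.{u} Cardinal.continuum.{0} := by
    rw [Cardinal.lift_continuum]
    exact hc.le
  obtain ⟨κ₀, hκ₀⟩ := Cardinal.mem_range_lift_of_le hlift
  have hκinf : Cardinal.aleph0 ≤ κ₀ := by
    have h1 : Cardinal.lift.{u} Cardinal.aleph0.{0} ≤ Cardinal.lift.{u} κ₀ := by
      rw [Cardinal.lift_aleph0, hκ₀]
      exact le_trans hfin (le_of_eq hmkD)
    exact Cardinal.lift_le.mp h1
  have hκc : κ₀ < Cardinal.continuum.{0} := by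
    have h1 : Cardinal.lift.{u} κ₀ < Cardinal.lift.{u} Cardinal.continuum.{0} := by
      rw [hκ₀, Cardinal.lift_continuum]
      exact hc
    exact Cardinal.lift_lt.mp h1
  -- the closed set M
  set M : Set X := closure A with hM
  have hDM : D ⊆ M := le_trans hDA subset_closure
  have hMD : M ⊆ closure D := closure_minimal hAD isClosed_closure
  have hdensM : dens M ≤ Cardinal.lift.{u} κ₀ := by
    rw [hκ₀, ← hmkD]
    exact ciInf_le' _ (⟨D, hDM, hMD⟩ : {E : Set X // E ⊆ M ∧ M ⊆ closure E})
  have hsmall : ∀ f : X → ℝ, Continuous f → Cardinal.mk (f '' M) ≤ κ₀ := by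
    intro f hf
    have h1 := h f hf M
    have h2 : Cardinal.lift.{u} (Cardinal.mk (f '' M)) ≤ Cardinal.lift.{u} κ₀ :=
      le_trans h1 hdensM
    exact Cardinal.lift_le.mp h2
  have hD2 : Cardinal.lift.{0} (Cardinal.mk D) ≤ Cardinal.lift.{u} κ₀ := by
    rw [Cardinal.lift_uzero, hmkD, hκ₀]
  have hfinal := aux_main κ₀ hκinf hκc M D hDM hMD isClosed_closure hsmall hD2
  rw [Cardinal.lift_uzero] at hfinal
  have hAM : Cardinal.mk A ≤ Cardinal.mk M := Cardinal.mk_le_mk_of_subset subset_closure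
  have : Cardinal.mk A ≤ dens A := by
    rw [hκ₀] at hfinal
    exact le_trans hAM hfinal
  exact absurd (lt_of_lt_of_le hA this) (lt_irrefl _)
end

section
/- Let X be a metrizable space in which every metric generating the topology of X is economical. Then for every subspace A ⊂ X and every continuous function f : X → ℝ, the image f(A) has cardinality at most dens(A). -/
universe u

lemma aleph0_le_dens {X : Type u} [TopologicalSpace X] [T1Space X] {A : Set X}
    (hA : A.Infinite) : Cardinal.aleph0 ≤ dens A := by
  have : Nonempty {D : Set X // D ⊆ A ∧ A ⊆ closure D} :=
    ⟨⟨A, le_refl A, subset_closure⟩⟩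
  refine le_ciInf fun D => ?_
  by_contra hlt
  push_neg at hlt
  have hfin : D.1.Finite := Cardinal.lt_aleph0_iff_set_finite.1 hlt
  have : closure D.1 = D.1 := hfin.isClosed.closure_eq
  exact hA (hfin.subset (this ▸ D.2.2))

/-- If every metric generating the topology of `X` is economical, then for every
subspace `A ⊆ X` and every continuous `f : X → ℝ`, `|f(A)| ≤ dens A`. -/
theorem all_metrics_economical_implies_small_images
    {X : Type u} [t : TopologicalSpace X] [TopologicalSpace.MetrizableSpace X]
    (h : ∀ m : MetricSpace X, m.toUniformSpace.toTopologicalSpace = t →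
      IsEconomicalMetric m.dist)
    (A : Set X) (f : X → ℝ) (hf : Continuous f) :
    Cardinal.lift.{u} (Cardinal.mk (f '' A)) ≤ dens A := by
  by_cases hA : A.Infinite
  · -- main case
    obtain ⟨m, hm⟩ : ∃ m : MetricSpace X, m.toUniformSpace.toTopologicalSpace = t :=
      ⟨TopologicalSpace.metrizableSpaceMetric X, rfl⟩
    subst hm
    letI : MetricSpace X := m
    -- auxiliary continuous function
    set g : X → ℝ := fun x => Real.arctan (f x) with hg
    have hgc : Continuous g := Real.continuous_arctan.comp hf
    -- distance for the second metric
    set d₂ : X → X → ℝ := fun x y => dist x y + |g x - g y| with hd₂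
    have hd₂self : ∀ x, d₂ x x = 0 := by
      intro x; simp [hd₂]
    have hd₂comm : ∀ x y, d₂ x y = d₂ y x := by
      intro x y; simp [hd₂, dist_comm, abs_sub_comm]
    have hd₂tri : ∀ x y z, d₂ x z ≤ d₂ x y + d₂ y z := by
      intro x y z
      have h1 := dist_triangle x y z
      have h2 : |g x - g z| ≤ |g x - g y| + |g y - g z| := abs_sub_le _ _ _
      simp only [hd₂]; linarith
    have hd₂le : ∀ x y, dist x y ≤ d₂ x y := by
      intro x y; simp only [hd₂]; nlinarith [abs_nonneg (g x - g y)]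
    -- continuity of d₂ in the second variable
    have hd₂cont : ∀ x : X, Continuous (fun y => d₂ x y) := by
      intro x
      exact (continuous_const.dist continuous_id).add ((continuous_const.sub hgc).abs)
    have hopen : ∀ s : Set X, IsOpen s ↔ ∀ x ∈ s, ∃ ε > 0, ∀ y, d₂ x y < ε → y ∈ s := by
      intro s
      constructor
      · intro hs x hx
        rw [Metric.isOpen_iff] at hs
        obtain ⟨ε, hε, hball⟩ := hs x hx
        exact ⟨ε, hε, fun y hy => hball (by
          rw [Metric.mem_ball, dist_comm]
          exact lt_of_le_of_lt (hd₂le x y) hy)⟩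
      · intro hs
        rw [isOpen_iff_mem_nhds]
        intro x hx
        obtain ⟨ε, hε, hb⟩ := hs x hx
        have : {y | d₂ x y < ε} ∈ nhds x := by
          have : IsOpen {y | d₂ x y < ε} :=
            isOpen_lt (hd₂cont x) continuous_const
          exact this.mem_nhds (by simp [hd₂self x, hε])
        exact Filter.mem_of_superset this hb
    -- second metric
    let m₂ : MetricSpace X := MetricSpace.ofDistTopology d₂ hd₂self hd₂comm hd₂tri hopen
      (fun x y hxy => eq_of_dist_eq_zero (le_antisymm
        (by calc dist x y ≤ d₂ x y := hd₂le x y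
              _ = 0 := hxy) dist_nonneg))
    have hm₂ : m₂.toUniformSpace.toTopologicalSpace = m.toUniformSpace.toTopologicalSpace := rfl
    have hm₂dist : m₂.dist = d₂ := rfl
    -- economical bounds
    have h1 := h m rfl A hA
    have h2 := h m₂ hm₂ A hA
    rw [hm₂dist] at h2
    have hdensA : Cardinal.aleph0 ≤ dens A := aleph0_le_dens hA
    -- T : set of values |g x - g y|
    set S₁ : Set ℝ := Set.image2 m.dist A A with hS₁
    set S₂ : Set ℝ := Set.image2 d₂ A A with hS₂
    set T : Set ℝ := Set.image2 (fun a b => a - b) S₂ S₁ with hT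
    have hTle : Cardinal.lift.{u} (Cardinal.mk T) ≤ dens A := by
      calc Cardinal.lift.{u} (Cardinal.mk T)
          ≤ Cardinal.lift.{u} (Cardinal.mk S₂ * Cardinal.mk S₁) :=
            Cardinal.lift_le.2 Cardinal.mk_image2_le
        _ = Cardinal.lift.{u} (Cardinal.mk S₂) * Cardinal.lift.{u} (Cardinal.mk S₁) :=
            Cardinal.lift_mul _ _
        _ ≤ dens A * dens A := mul_le_mul' h2 h1
        _ = dens A := Cardinal.mul_eq_self hdensA
    have hmemT : ∀ x ∈ A, ∀ y ∈ A, |g x - g y| ∈ T := by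
      intro x hx y hy
      have hxy : d₂ x y = m.dist x y + |g x - g y| := rfl
      have heq : |g x - g y| = d₂ x y - m.dist x y := by rw [hxy]; ring
      rw [heq]
      have hmem1 : m.dist x y ∈ S₁ := Set.mem_image2_of_mem hx hy
      have hmem2 : d₂ x y ∈ S₂ := Set.mem_image2_of_mem hx hy
      exact Set.mem_image2_of_mem hmem2 hmem1
    -- fix a base point
    obtain ⟨a, ha⟩ := hA.nonempty
    set c : ℝ := g a with hc
    -- g '' A is covered by two images of T
    have hcover : g '' A ⊆ (fun v => c + v) '' T ∪ (fun v => c - v) '' T := by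
      rintro _ ⟨x, hx, rfl⟩
      have hmem : |g x - c| ∈ T := hmemT x hx a ha
      rcases le_total c (g x) with hle | hle
      · left
        exact ⟨|g x - c|, hmem, by rw [abs_of_nonneg (by linarith)]; ring⟩
      · right
        exact ⟨|g x - c|, hmem, by rw [abs_of_nonpos (by linarith)]; ring⟩
    have hgA : Cardinal.lift.{u} (Cardinal.mk (g '' A)) ≤ dens A := by
      calc Cardinal.lift.{u} (Cardinal.mk (g '' A))
          ≤ Cardinal.lift.{u} (Cardinal.mk ((fun v => c + v) '' T ∪ (fun v => c - v) '' T :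
              Set ℝ)) := Cardinal.lift_le.2 (Cardinal.mk_le_mk_of_subset hcover)
        _ ≤ Cardinal.lift.{u} (Cardinal.mk ((fun v => c + v) '' T) +
              Cardinal.mk ((fun v => c - v) '' T)) := Cardinal.lift_le.2 (Cardinal.mk_union_le _ _)
        _ = Cardinal.lift.{u} (Cardinal.mk ((fun v => c + v) '' T)) +
              Cardinal.lift.{u} (Cardinal.mk ((fun v => c - v) '' T)) := Cardinal.lift_add _ _
        _ ≤ Cardinal.lift.{u} (Cardinal.mk T) + Cardinal.lift.{u} (Cardinal.mk T) :=
            add_le_add (Cardinal.lift_le.2 Cardinal.mk_image_le)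
              (Cardinal.lift_le.2 Cardinal.mk_image_le)
        _ ≤ dens A + dens A := add_le_add hTle hTle
        _ = dens A := Cardinal.add_eq_self hdensA
    -- relate f '' A and g '' A
    have himg : g '' A = Real.arctan '' (f '' A) := by
      rw [Set.image_image]
    have hcard : Cardinal.mk (f '' A) = Cardinal.mk (g '' A) := by
      rw [himg]
      exact (Cardinal.mk_image_eq Real.arctan_injective).symm
    rw [hcard]
    exact hgA
  · -- finite case
    rw [Set.not_infinite] at hA
    have : Nonempty {D : Set X // D ⊆ A ∧ A ⊆ closure D} :=
      ⟨⟨A, le_refl A, subset_closure⟩⟩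
    refine le_ciInf fun D => ?_
    have hDfin : D.1.Finite := hA.subset D.2.1
    have hDA : D.1 = A := le_antisymm D.2.1 (hDfin.isClosed.closure_eq ▸ D.2.2)
    calc Cardinal.lift.{u} (Cardinal.mk (f '' A))
        ≤ Cardinal.lift.{0} (Cardinal.mk A) := Cardinal.mk_image_le_lift
      _ = Cardinal.mk A := by simp
      _ = Cardinal.mk D.1 := by rw [hDA]
end

section
/- For a metrizable space X, if min{|A|, 𝔠} ≤ dens(A) for every subspace A ⊂ X, then every metric generating the topology of X is economical. -/
universe u

/-- If `min {|A|, 𝔠} ≤ dens A` for every subspace `A ⊆ X` of a metrizable space `X`,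
then every metric generating the topology of `X` is economical. -/
theorem min_card_le_density_implies_all_metrics_economical
    {X : Type u} [t : TopologicalSpace X] [TopologicalSpace.MetrizableSpace X]
    (h : ∀ A : Set X, min (Cardinal.mk A) Cardinal.continuum ≤ dens A)
    (m : MetricSpace X) (hm : m.toUniformSpace.toTopologicalSpace = t) :
    IsEconomicalMetric m.dist := by
  intro A hA
  refine le_trans (le_min ?_ ?_) (h A)
  · -- |image2 d A A| ≤ |A|
    have h1 : Cardinal.lift.{u} (Cardinal.mk (Set.image2 m.dist A A)) ≤
        Cardinal.lift.{0} (Cardinal.mk (A ×ˢ A : Set (X × X))) := by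
      rw [← Set.image_uncurry_prod]
      exact Cardinal.mk_image_le_lift
    rw [Cardinal.lift_uzero] at h1
    refine h1.trans ?_
    have : Cardinal.mk (A ×ˢ A : Set (X × X)) = Cardinal.mk A * Cardinal.mk A := by
      rw [Cardinal.mk_setProd]
    rw [this]
    haveI := hA.to_subtype
    exact (Cardinal.mul_eq_self (Cardinal.aleph0_le_mk A)).le
  · -- |image2 d A A| ≤ 𝔠
    have : Cardinal.mk (Set.image2 m.dist A A) ≤ Cardinal.continuum := by
      refine le_trans (Cardinal.mk_set_le _) ?_
      rw [Cardinal.mk_real]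
    calc Cardinal.lift.{u} (Cardinal.mk (Set.image2 m.dist A A))
        ≤ Cardinal.lift.{u} Cardinal.continuum := Cardinal.lift_le.2 this
      _ = Cardinal.continuum := Cardinal.lift_continuum
end

section
/- A premetric space X is hereditary if and only if it is basic; that is, for every subset A ⊂ X the subspace topology on A coincides with the topology generated by the restricted premetric, if and only if for every x ∈ X the family of balls {B(x,r) : r > 0} is a neighborhood base at x. -/
/-- A premetric on `X`: a function `d : X × X → [0,∞)` with `d x x = 0`. -/
structure Premetric (X : Type*) where
  d : X → X → ℝ
  nonneg : ∀ x y, 0 ≤ d x y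
  refl : ∀ x, d x x = 0

namespace Premetric

variable {X : Type*}

/-- The ball of radius `r` centered at `x` in a premetric space. -/
def ball (p : Premetric X) (x : X) (r : ℝ) : Set X := {y | p.d x y < r}

/-- The premetric topology: `U` is open iff every point of `U` contains a ball
around it inside `U`. -/
def topology (p : Premetric X) : TopologicalSpace X where
  IsOpen U := ∀ x ∈ U, ∃ r > 0, p.ball x r ⊆ U
  isOpen_univ := fun x _ => ⟨1, one_pos, fun _ _ => trivial⟩
  isOpen_inter := by
    intro U V hU hV x hx
    obtain ⟨r, hr, hrU⟩ := hU x hx.1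
    obtain ⟨s, hs, hsV⟩ := hV x hx.2
    refine ⟨min r s, lt_min hr hs, fun y hy => ⟨hrU ?_, hsV ?_⟩⟩
    · have h : p.d x y < min r s := hy
      exact h.trans_le (min_le_left _ _)
    · have h : p.d x y < min r s := hy
      exact h.trans_le (min_le_right _ _)
  isOpen_sUnion := by
    intro S hS x hx
    obtain ⟨U, hU, hxU⟩ := hx
    obtain ⟨r, hr, hrU⟩ := hS U hU x hxU
    exact ⟨r, hr, fun y hy => ⟨U, hU, hrU hy⟩⟩

/-- A premetric space is basic if every ball `B(x,r)` is a neighborhood of `x`,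
i.e. the balls form a neighborhood base at each point. -/
def Basic (p : Premetric X) : Prop :=
  ∀ x : X, ∀ r > (0:ℝ), p.ball x r ∈ @nhds X p.topology x

end Premetric

/-- The premetric induced on a subset `A ⊆ X`. -/
def Premetric.restrict {X : Type*} (p : Premetric X) (A : Set X) : Premetric A where
  d a b := p.d a.1 b.1
  nonneg a b := p.nonneg a.1 b.1
  refl a := p.refl a.1

/-- A premetric space is hereditary iff it is basic: for every subset `A ⊆ X`
the subspace topology on `A` coincides with the topology of the restricted
premetric, if and only if the balls form a neighborhood base at every point. -/
theorem hereditary_iff_basic {X : Type*} (p : Premetric X) :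
    (∀ A : Set X, p.topology.induced (Subtype.val : A → X) = (p.restrict A).topology)
      ↔ p.Basic := by
  letI : TopologicalSpace X := p.topology
  constructor
  · intro h x r hr
    set A : Set X := insert x (p.ball x r)ᶜ with hA
    have hxA : x ∈ A := Set.mem_insert _ _
    have hopen : (p.restrict A).topology.IsOpen {(⟨x, hxA⟩ : A)} := by
      intro a ha
      refine ⟨r, hr, fun b hb => ?_⟩
      simp only [Set.mem_singleton_iff] at ha ⊢
      subst ha
      have hb' : p.d x b.1 < r := hb
      rcases b.2 with h1 | h2
      · exact Subtype.ext h1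
      · exact absurd hb' h2
    rw [← h A] at hopen
    obtain ⟨U, hU, hUeq⟩ := hopen
    have hxU : x ∈ U := by
      have : (⟨x, hxA⟩ : A) ∈ Subtype.val ⁻¹' U := by
        rw [hUeq]; rfl
      exact this
    have hUsub : U ⊆ p.ball x r := by
      intro y hy
      by_contra hy'
      have hyA : y ∈ A := Or.inr hy'
      have : (⟨y, hyA⟩ : A) ∈ Subtype.val ⁻¹' U := hy
      rw [hUeq] at this
      have hyx : y = x := congrArg Subtype.val this
      apply hy'
      rw [hyx]
      show p.d x x < r
      simpa [p.refl] using hr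
    exact mem_nhds_iff.mpr ⟨U, hUsub, hU, hxU⟩
  · intro hb A
    apply TopologicalSpace.ext_iff.mpr
    intro V
    constructor
    · rintro ⟨U, hU, rfl⟩
      intro a ha
      obtain ⟨r, hr, hrU⟩ := hU a.1 ha
      exact ⟨r, hr, fun b hb2 => hrU hb2⟩
    · intro hV
      choose r hr hrV using hV
      have h2 : ∀ a (ha : a ∈ V), ∃ U ⊆ p.ball a.1 (r a ha),
          IsOpen U ∧ a.1 ∈ U := fun a ha =>
        mem_nhds_iff.mp (hb a.1 (r a ha) (hr a ha))
      choose U hU1 hU2 hU3 using h2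
      refine ⟨⋃ (a : A) (ha : a ∈ V), U a ha, isOpen_iUnion fun a =>
        isOpen_iUnion fun ha => hU2 a ha, ?_⟩
      apply Set.eq_of_subset_of_subset
      · rintro b hbW
        simp only [Set.mem_preimage, Set.mem_iUnion] at hbW
        obtain ⟨a, ha, hbU⟩ := hbW
        exact hrV a ha (hU1 a ha hbU)
      · intro a ha
        simp only [Set.mem_preimage, Set.mem_iUnion]
        exact ⟨a, ha, hU3 a ha⟩
end

section
/- A topological space X is weakly first-countable if and only if its topology is generated by a premetric; X is first-countable if and only if its topology is generated by a basic premetric. -/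
/-- A topological space is weakly first-countable if to each point one can assign
a decreasing sequence of sets containing it which detects openness. -/
def WeaklyFirstCountable (X : Type*) [TopologicalSpace X] : Prop :=
  ∃ B : X → ℕ → Set X, (∀ x n, x ∈ B x n) ∧ (∀ x n, B x (n + 1) ⊆ B x n) ∧
    ∀ U : Set X, IsOpen U ↔ ∀ x ∈ U, ∃ n, B x n ⊆ U

section Aux

open Classical

lemma Premetric.ball_mono {X : Type*} (p : Premetric X) (x : X) {r s : ℝ} (h : r ≤ s) :
    p.ball x r ⊆ p.ball x s := fun _ hy => lt_of_lt_of_le hy h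

noncomputable def dOf {X : Type*} (B : X → ℕ → Set X) (x y : X) : ℝ :=
  if y = x then 0 else if h : ∃ n, y ∉ B x n then 1/((Nat.find h : ℝ) + 1) else 0

noncomputable def pmOf {X : Type*} (B : X → ℕ → Set X) : Premetric X where
  d := dOf B
  nonneg x y := by unfold dOf; split_ifs <;> positivity
  refl x := by simp [dOf]

lemma pmOf_ball {X : Type*} (B : X → ℕ → Set X) (hmem : ∀ x n, x ∈ B x n)
    (hanti : ∀ x n, B x (n+1) ⊆ B x n) (x : X) (n : ℕ) :
    (pmOf B).ball x (1/((n:ℝ)+1)) = B x n := by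
  have hA : ∀ x : X, Antitone (B x) := fun x => antitone_nat_of_succ_le (fun k => hanti x k)
  have hpos : (0:ℝ) < 1/((n:ℝ)+1) := by positivity
  ext y
  show dOf B x y < 1/((n:ℝ)+1) ↔ y ∈ B x n
  unfold dOf
  split_ifs with h1 h2
  · exact ⟨fun _ => h1 ▸ hmem x n, fun _ => hpos⟩
  · constructor
    · intro hlt
      have hN : (n:ℝ) + 1 < (Nat.find h2 : ℝ) + 1 :=
        lt_of_one_div_lt_one_div (by positivity) hlt
      have hn : (n:ℝ) < Nat.find h2 := by linarith
      have hN' : n < Nat.find h2 := by exact_mod_cast hn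
      exact not_not.mp (Nat.find_min h2 hN')
    · intro hy
      have hN' : n < Nat.find h2 := by
        by_contra hc
        exact Nat.find_spec h2 (hA x (not_lt.mp hc) hy)
      have : (n:ℝ) + 1 < (Nat.find h2 : ℝ) + 1 := by exact_mod_cast Nat.succ_lt_succ hN'
      exact one_div_lt_one_div_of_lt (by positivity) this
  · push_neg at h2
    exact ⟨fun _ => h2 n, fun _ => hpos⟩

/-- openness in the `pmOf` topology matches the `B`-criterion. -/
lemma pmOf_isOpen {X : Type*} (B : X → ℕ → Set X) (hmem : ∀ x n, x ∈ B x n)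
    (hanti : ∀ x n, B x (n+1) ⊆ B x n) (U : Set X) :
    (pmOf B).topology.IsOpen U ↔ ∀ x ∈ U, ∃ n, B x n ⊆ U := by
  show (∀ x ∈ U, ∃ r > 0, (pmOf B).ball x r ⊆ U) ↔ _
  constructor
  · intro h x hx
    obtain ⟨r, hr, hsub⟩ := h x hx
    obtain ⟨n, hn⟩ := exists_nat_one_div_lt hr
    refine ⟨n, fun y hy => hsub ?_⟩
    have : y ∈ (pmOf B).ball x (1/((n:ℝ)+1)) := (pmOf_ball B hmem hanti x n).symm ▸ hy
    exact (pmOf B).ball_mono x hn.le this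
  · intro h x hx
    obtain ⟨n, hn⟩ := h x hx
    exact ⟨1/((n:ℝ)+1), by positivity, (pmOf_ball B hmem hanti x n).symm ▸ hn⟩

/-- balls of a premetric's topology satisfy the openness criterion in reverse. -/
lemma premetric_isOpen_iff {X : Type*} (p : Premetric X) (U : Set X) :
    p.topology.IsOpen U ↔ ∀ x ∈ U, ∃ n : ℕ, p.ball x (1/((n:ℝ)+1)) ⊆ U := by
  show (∀ x ∈ U, ∃ r > 0, p.ball x r ⊆ U) ↔ _
  constructor
  · intro h x hx
    obtain ⟨r, hr, hsub⟩ := h x hx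
    obtain ⟨n, hn⟩ := exists_nat_one_div_lt hr
    exact ⟨n, fun y hy => hsub (p.ball_mono x hn.le hy)⟩
  · intro h x hx
    obtain ⟨n, hn⟩ := h x hx
    exact ⟨1/((n:ℝ)+1), by positivity, hn⟩

end Aux

/-- A topological space is weakly first-countable iff its topology is generated by
a premetric; it is first-countable iff its topology is generated by a basic
premetric. -/
theorem weaklyFirstCountable_iff_premetric (X : Type*) [t : TopologicalSpace X] :
    (WeaklyFirstCountable X ↔ ∃ p : Premetric X, p.topology = t) ∧
    (FirstCountableTopology X ↔ ∃ p : Premetric X, p.topology = t ∧ p.Basic) := by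
  constructor
  · constructor
    · rintro ⟨B, hmem, hanti, hopen⟩
      refine ⟨pmOf B, ?_⟩
      refine TopologicalSpace.ext_iff.mpr fun U => ?_
      exact (pmOf_isOpen B hmem hanti U).trans (hopen U).symm
    · rintro ⟨p, hp⟩
      refine ⟨fun x n => p.ball x (1/((n:ℝ)+1)), ?_, ?_, ?_⟩
      · intro x n
        show p.d x x < _
        rw [p.refl]; positivity
      · intro x n
        refine p.ball_mono x ?_
        have h1 : (0:ℝ) < (n:ℝ)+1 := by positivity
        apply one_div_le_one_div_of_le h1
        push_cast; linarith
      · intro U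
        rw [← hp]
        exact premetric_isOpen_iff p U
  · constructor
    · intro hfc
      haveI := hfc
      choose b hb using fun x : X => (nhds x).exists_antitone_basis
      have hmem : ∀ x n, x ∈ b x n := fun x n => mem_of_mem_nhds ((hb x).1.mem_of_mem trivial)
      have hanti : ∀ x n, b x (n+1) ⊆ b x n := fun x n => (hb x).2 (Nat.le_succ n)
      have htop : (pmOf b).topology = t := by
        refine TopologicalSpace.ext_iff.mpr fun U => ?_
        refine (pmOf_isOpen b hmem hanti U).trans ?_
        rw [isOpen_iff_mem_nhds]
        refine (forall_congr' fun x => forall_congr' fun _ => ?_).symm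
        rw [(hb x).1.mem_iff]
        simp
      refine ⟨pmOf b, htop, ?_⟩
      intro x r hr
      rw [htop]
      obtain ⟨n, hn⟩ := exists_nat_one_div_lt hr
      refine Filter.mem_of_superset ?_ ((pmOf b).ball_mono x hn.le)
      rw [pmOf_ball b hmem hanti x n]
      exact (hb x).1.mem_of_mem trivial
    · rintro ⟨p, hp, hbasic⟩
      refine ⟨fun a => ?_⟩
      have hbasis : (nhds a).HasBasis (fun _ : ℕ => True)
          (fun n => p.ball a (1/((n:ℝ)+1))) := by
        refine Filter.hasBasis_iff.mpr fun U => ?_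
        constructor
        · intro hU
          obtain ⟨V, hVU, hV, haV⟩ := mem_nhds_iff.mp hU
          rw [← hp] at hV
          have hV' : ∀ x ∈ V, ∃ r > 0, p.ball x r ⊆ V := hV
          obtain ⟨r, hr, hsub⟩ := hV' a haV
          obtain ⟨n, hn⟩ := exists_nat_one_div_lt hr
          exact ⟨n, trivial, fun y hy => hVU (hsub (p.ball_mono a hn.le hy))⟩
        · rintro ⟨n, -, hsub⟩
          have hball := hbasic a _ (show (0:ℝ) < 1/((n:ℝ)+1) by positivity)
          rw [hp] at hball
          exact Filter.mem_of_superset hball hsub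
      exact hbasis.isCountablyGenerated
end

section
/- In a 2-separating premetric space X, a sequence (x_n) converges to a point x in the premetric topology if and only if d(x, x_n) → 0. -/
/-- A premetric space is 2-separating if any two distinct points have disjoint
balls of some common radius. -/
def Premetric.TwoSeparating {X : Type*} (p : Premetric X) : Prop :=
  ∀ x y : X, x ≠ y → ∃ r > (0:ℝ), p.ball x r ∩ p.ball y r = ∅

namespace PremetricAux

open Filter Set

variable {X : Type*}

lemma isOpen_iff (p : Premetric X) {U : Set X} :
    p.topology.IsOpen U ↔ ∀ x ∈ U, ∃ r > 0, p.ball x r ⊆ U := Iff.rfl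

lemma mem_ball_iff (p : Premetric X) {z w : X} {r : ℝ} :
    w ∈ p.ball z r ↔ p.d z w < r := Iff.rfl

lemma not_both {p : Premetric X} {z w : X} {r : ℝ}
    (h : p.ball z r ∩ p.ball w r = ∅) (v : X) :
    ¬ (p.d z v < r ∧ p.d w v < r) := by
  intro hv
  have : v ∈ p.ball z r ∩ p.ball w r := ⟨hv.1, hv.2⟩
  rw [h] at this
  exact this

/-- 2-separation implies positivity of `d` off the diagonal. -/
lemma pos_of_ne {p : Premetric X} (h2 : p.TwoSeparating) {z w : X} (h : z ≠ w) :
    0 < p.d z w := by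
  obtain ⟨r, hr, hdisj⟩ := h2 z w h
  have hw : ¬ (p.d z w < r ∧ p.d w w < r) := not_both hdisj w
  rw [p.refl] at hw
  by_contra hle
  push_neg at hle
  exact hw ⟨lt_of_le_of_lt hle hr, hr⟩

end PremetricAux

/-- In a 2-separating premetric space, a sequence converges to `x` in the
premetric topology iff `d(x, xₙ) → 0`. -/
theorem tendsto_iff_premetric_tendsto_zero {X : Type*} (p : Premetric X)
    (h2 : p.TwoSeparating) (u : ℕ → X) (x : X) :
    Filter.Tendsto u Filter.atTop (@nhds X p.topology x) ↔
      Filter.Tendsto (fun n => p.d x (u n)) Filter.atTop (nhds 0) := by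
  letI : TopologicalSpace X := p.topology
  open Filter Set PremetricAux in
  constructor
  · -- hard direction
    intro hu
    classical
    -- convenient form of convergence: eventually in every open set containing x
    have hconv : ∀ W : Set X, p.topology.IsOpen W → x ∈ W → ∃ N, ∀ n ≥ N, u n ∈ W := by
      intro W hW hxW
      have hWnhds : W ∈ @nhds X p.topology x := IsOpen.mem_nhds hW hxW
      have := hu hWnhds
      exact Filter.eventually_atTop.mp this
    by_contra hnot
    rw [Metric.tendsto_atTop] at hnot
    push_neg at hnot
    obtain ⟨ε, hε, hfreq⟩ := hnot
    have hfreq' : ∀ N : ℕ, ∃ n ≥ N, ε ≤ p.d x (u n) := by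
      intro N
      obtain ⟨n, hn, h⟩ := hfreq N
      refine ⟨n, hn, ?_⟩
      rwa [Real.dist_eq, sub_zero, abs_of_nonneg (p.nonneg _ _)] at h
    set S : Set ℕ := {n | ε ≤ p.d x (u n)} with hSdef
    have hSinf : S.Infinite := by
      intro hfin
      obtain ⟨B, hB⟩ := hfin.bddAbove
      obtain ⟨n, hn, hnS⟩ := hfreq' (B + 1)
      have : n ≤ B := hB hnS
      omega
    rcases Set.finite_or_infinite (u '' S) with hA | hA
    · -- finitely many bad values: one value `a` is attained infinitely often
      have hpig : ∃ a ∈ u '' S, {n | n ∈ S ∧ u n = a}.Infinite := by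
        by_contra hall
        push_neg at hall
        have hsub : S ⊆ ⋃ a ∈ u '' S, {n | n ∈ S ∧ u n = a} := by
          intro n hn
          exact Set.mem_biUnion ⟨n, hn, rfl⟩ ⟨hn, rfl⟩
        exact hSinf ((hA.biUnion hall).subset hsub)
      obtain ⟨a, haA, hTa⟩ := hpig
      have hax : a ≠ x := by
        obtain ⟨n, hnS, rfl⟩ := haA
        intro h
        have : ε ≤ p.d x (u n) := hnS
        rw [h, p.refl] at this
        linarith
      have hWopen : p.topology.IsOpen ({a}ᶜ : Set X) := by
        intro z hz
        have hza : z ≠ a := by simpa using hz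
        refine ⟨p.d z a, pos_of_ne h2 hza, ?_⟩
        intro w hw
        simp only [Set.mem_compl_iff, Set.mem_singleton_iff]
        intro hwa
        rw [hwa] at hw
        exact absurd (show p.d z a < p.d z a from hw) (lt_irrefl _)
      obtain ⟨N, hN⟩ := hconv _ hWopen (by simpa using hax.symm)
      -- but u n = a for infinitely many n
      have : ∃ n ∈ {n | n ∈ S ∧ u n = a}, N < n := hTa.exists_gt N
      obtain ⟨n, ⟨_, hna⟩, hNn⟩ := this
      have := hN n (le_of_lt hNn)
      rw [hna] at this
      simp at this
    · -- infinitely many distinct bad values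
      set e := Set.Infinite.natEmbedding _ hA with he
      set y : ℕ → X := fun k => (e k : X) with hy
      have hyinj : Function.Injective y := fun i j h =>
        e.injective (Subtype.ext h)
      have hymem : ∀ k, y k ∈ u '' S := fun k => (e k).2
      have hyε : ∀ k, ε ≤ p.d x (y k) := by
        intro k
        obtain ⟨n, hnS, hun⟩ := hymem k
        rw [← hun]
        exact hnS
      have hyx : ∀ k, y k ≠ x := by
        intro k h
        have := hyε k
        rw [h, p.refl] at this
        linarith
      -- a point n ≥ N with u n in a given infinite family of the y's
      have hhit : ∀ (φ : ℕ → ℕ), Function.Injective φ → ∀ N : ℕ,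
          ∃ n ≥ N, ∃ i, u n = y (φ i) := by
        intro φ hφ N
        have hg : ∀ i, ∃ n, n ∈ S ∧ u n = y (φ i) := fun i => hymem (φ i)
        choose g hgS hgu using hg
        have hginj : Function.Injective g := by
          intro i j h
          apply hφ.eq_iff.mp
          apply hyinj
          rw [← hgu i, ← hgu j, h]
        have : (Set.range g).Infinite := Set.infinite_range_of_injective hginj
        obtain ⟨n, ⟨i, rfl⟩, hNn⟩ := this.exists_gt N
        exact ⟨g i, le_of_lt hNn, i, hgu i⟩
      by_cases hcap : ∃ z : X, ∀ s > (0:ℝ), ∃ k, y k ≠ z ∧ p.d z (y k) < s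
      · -- some point z₀ captures the bad values; a diagonal subsequence together
        -- with z₀ forms a closed set avoiding x
        obtain ⟨z₀, hz₀⟩ := hcap
        have hxz₀ : x ≠ z₀ := by
          intro h
          obtain ⟨k, _, hk⟩ := hz₀ ε hε
          rw [← h] at hk
          exact absurd (hyε k) (not_le.mpr hk)
        -- at every scale, infinitely many captured indices
        have hinf : ∀ i : ℕ, ∃ᶠ k in Filter.atTop,
            y k ≠ z₀ ∧ p.d z₀ (y k) < 1 / ((i : ℝ) + 1) := by
          intro i
          rw [Filter.frequently_atTop]
          intro K
          have hipos : (0:ℝ) < 1 / ((i : ℝ) + 1) := by positivity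
          set F : Finset ℝ :=
            insert (1 / ((i : ℝ) + 1))
              (((Finset.range K).filter (fun k => y k ≠ z₀)).image
                (fun k => p.d z₀ (y k))) with hF
          have hFne : F.Nonempty := ⟨_, Finset.mem_insert_self _ _⟩
          set c := F.min' hFne with hc
          have hcpos : 0 < c := by
            have hmem := F.min'_mem hFne
            rw [← hc] at hmem
            rw [hF] at hmem
            rcases Finset.mem_insert.mp hmem with h | h
            · rw [h]; exact hipos
            · obtain ⟨k, hk, hdk⟩ := Finset.mem_image.mp h
              have : y k ≠ z₀ := (Finset.mem_filter.mp hk).2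
              rw [← hdk]
              exact pos_of_ne h2 (Ne.symm this)
          obtain ⟨k, hkne, hkd⟩ := hz₀ c hcpos
          have hcle : c ≤ 1 / ((i : ℝ) + 1) := Finset.min'_le _ _ (Finset.mem_insert_self _ _)
          refine ⟨k, ?_, hkne, lt_of_lt_of_le hkd hcle⟩
          by_contra hkK
          push_neg at hkK
          have hkF : p.d z₀ (y k) ∈ F := by
            rw [hF]
            apply Finset.mem_insert_of_mem
            exact Finset.mem_image.mpr ⟨k, Finset.mem_filter.mpr ⟨Finset.mem_range.mpr hkK, hkne⟩, rfl⟩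
          have : c ≤ p.d z₀ (y k) := Finset.min'_le _ _ hkF
          linarith
        obtain ⟨φ, hφmono, hφ⟩ := Filter.extraction_forall_of_frequently hinf
        set SA : Set X := {z₀} ∪ Set.range (fun i => y (φ i)) with hSA
        have hxSA : x ∉ SA := by
          rw [hSA]
          rintro (h | ⟨i, hi⟩)
          · exact hxz₀ (by simpa using h)
          · exact hyx (φ i) hi
        have hWopen : p.topology.IsOpen SAᶜ := by
          intro z hz
          have hzz₀ : z ≠ z₀ := by
            intro h
            exact hz (by rw [hSA, h]; exact Or.inl rfl)
          have hzy : ∀ i, z ≠ y (φ i) := by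
            intro i h
            exact hz (by rw [hSA, h]; exact Or.inr ⟨i, rfl⟩)
          obtain ⟨r, hr, hdisj⟩ := h2 z z₀ hzz₀
          set i₀ : ℕ := ⌈1 / r⌉₊ with hi₀
          set F : Finset ℝ :=
            insert r ((Finset.range i₀).image (fun i => p.d z (y (φ i)))) with hF
          have hFne : F.Nonempty := ⟨_, Finset.mem_insert_self _ _⟩
          set c := F.min' hFne with hc
          have hcpos : 0 < c := by
            have hmem := F.min'_mem hFne
            rw [← hc, hF] at hmem
            rcases Finset.mem_insert.mp hmem with h | h
            · rw [h]; exact hr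
            · obtain ⟨i, _, hdk⟩ := Finset.mem_image.mp h
              rw [← hdk]
              exact pos_of_ne h2 (hzy i)
          have hcr : c ≤ r := Finset.min'_le _ _ (Finset.mem_insert_self _ _)
          refine ⟨c, hcpos, ?_⟩
          intro w hw
          have hdzw : p.d z w < c := hw
          simp only [Set.mem_compl_iff]
          intro hwSA
          rw [hSA] at hwSA
          rcases hwSA with hwz | ⟨i, hwy0⟩
          on_goal 2 => have hwy : w = y (φ i) := by exact hwy0.symm
          · -- w = z₀ : but d(z,z₀) ≥ r
            have hwz' : w = z₀ := hwz
            have hnb : ¬ (p.d z z₀ < r ∧ p.d z₀ z₀ < r) := not_both hdisj z₀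
            rw [p.refl] at hnb
            apply hnb
            constructor
            · rw [hwz'] at hdzw
              exact lt_of_lt_of_le hdzw hcr
            · exact hr
          · rcases lt_or_ge i i₀ with hii | hii
            · -- small indices are excluded by the finite min
              have hmemF : p.d z (y (φ i)) ∈ F := by
                rw [hF]
                exact Finset.mem_insert_of_mem
                  (Finset.mem_image.mpr ⟨i, Finset.mem_range.mpr hii, rfl⟩)
              have : c ≤ p.d z (y (φ i)) := Finset.min'_le _ _ hmemF
              rw [← hwy] at this
              linarith
            · -- large indices are in ball(z₀, r), contradicting disjointness
              have h1r : 1 / r ≤ (i : ℝ) := by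
                have := Nat.ceil_le.mp hii
                exact_mod_cast this
              have hlt : 1 / ((i : ℝ) + 1) < r := by
                rw [div_lt_iff₀ (by positivity)]
                have h0 : 1 / r < (i : ℝ) + 1 := lt_of_le_of_lt h1r (by linarith)
                calc (1:ℝ) = r * (1 / r) := by field_simp
                _ < r * ((i:ℝ) + 1) := by
                    apply mul_lt_mul_of_pos_left h0 hr
              have hball : p.d z₀ w < r := by
                rw [hwy]
                exact lt_trans (hφ i).2 hlt
              exact not_both hdisj w ⟨lt_of_lt_of_le hdzw hcr, hball⟩
        obtain ⟨N, hN⟩ := hconv _ hWopen hxSA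
        obtain ⟨n, hnN, i, hni⟩ := hhit (fun i => φ i) (hφmono.injective) N
        have := hN n hnN
        rw [hni] at this
        exact this (by rw [hSA]; exact Or.inr ⟨i, rfl⟩)
      · -- no capture: the range of y is closed
        push_neg at hcap
        have hWopen : p.topology.IsOpen (Set.range y)ᶜ := by
          intro z hz
          obtain ⟨s, hs, hk⟩ := hcap z
          refine ⟨s, hs, ?_⟩
          intro w hw
          simp only [Set.mem_compl_iff]
          rintro ⟨k, rfl⟩
          have hkz : y k ≠ z := by
            rintro rfl
            exact hz ⟨k, rfl⟩
          exact absurd (hw : p.d z (y k) < s) (not_lt.mpr (hk k hkz))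
        have hxW : x ∈ (Set.range y)ᶜ := by
          simp only [Set.mem_compl_iff]
          rintro ⟨k, hk⟩
          exact hyx k hk
        obtain ⟨N, hN⟩ := hconv _ hWopen hxW
        obtain ⟨n, hnN, i, hni⟩ := hhit id Function.injective_id N
        have := hN n hnN
        rw [hni] at this
        exact this ⟨i, rfl⟩
  · -- easy direction
    intro hd
    rw [Filter.tendsto_def]
    intro W hW
    rw [@mem_nhds_iff X p.topology x W] at hW
    obtain ⟨V, hVW, hVopen, hxV⟩ := hW
    obtain ⟨r, hr, hball⟩ := hVopen x hxV
    have hev : ∀ᶠ n in Filter.atTop, p.d x (u n) < r := by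
      have := hd (Iio_mem_nhds hr)
      simpa using this
    refine Filter.mem_of_superset hev ?_
    intro n hn
    exact hVW (hball hn)
end

section
/- A premetric space is 2-separating if and only if it is sequentially Hausdorff (every convergent sequence has a unique limit). -/
section Aux

variable {X : Type*} {p : Premetric X}

/-- Refined form of 2-separation: a positive radius below the distance whose
balls are disjoint. -/
lemma Premetric.sep' (hsep : p.TwoSeparating) {a b : X} (h : a ≠ b) :
    ∃ ρ > (0:ℝ), ρ ≤ p.d a b ∧ ∀ v, p.d a v < ρ → ¬ p.d b v < ρ := by
  obtain ⟨ρ, hρ, hE⟩ := hsep a b h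
  have hforall : ∀ v, p.d a v < ρ → ¬ p.d b v < ρ := by
    intro v h1 h2
    exact Set.eq_empty_iff_forall_notMem.mp hE v ⟨h1, h2⟩
  refine ⟨ρ, hρ, ?_, hforall⟩
  by_contra hlt
  push_neg at hlt
  exact hforall b hlt (by simpa [p.refl b] using hρ)

lemma Premetric.dpos (hsep : p.TwoSeparating) {a b : X} (h : a ≠ b) :
    0 < p.d a b := by
  obtain ⟨ρ, hρ, hle, _⟩ := Premetric.sep' hsep h
  linarith

/-- Given a finite set `G` not containing `z`, there is a radius `s > 0` such that
the ball `B(z,s)` avoids `G`. -/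
lemma Premetric.avoid (hsep : p.TwoSeparating) {z : X} {G : Set X} (hG : G.Finite)
    (hzG : z ∉ G) : ∃ s > (0:ℝ), ∀ v ∈ G, ¬ p.d z v < s := by
  classical
  rcases Set.eq_empty_or_nonempty G with hemp | hne
  · exact ⟨1, one_pos, by simp [hemp]⟩
  · have hFne : hG.toFinset.Nonempty := by
      rwa [Set.Finite.toFinset_nonempty]
    set f : X → ℝ := fun v => if h : z = v then 1 else (Premetric.sep' hsep h).choose
      with hf
    refine ⟨hG.toFinset.inf' hFne f, ?_, ?_⟩
    · show (0:ℝ) < hG.toFinset.inf' hFne f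
      rw [Finset.lt_inf'_iff]
      intro v hv
      have hzv : z ≠ v := fun h => hzG (h ▸ (hG.mem_toFinset.mp hv))
      simp only [hf, dif_neg hzv]
      exact (Premetric.sep' hsep hzv).choose_spec.1
    · intro v hvG hlt
      have hzv : z ≠ v := fun h => hzG (h ▸ hvG)
      have hle : f v ≤ p.d z v := by
        simp only [hf, dif_neg hzv]
        exact (Premetric.sep' hsep hzv).choose_spec.2.1
      have hinf : hG.toFinset.inf' hFne f ≤ f v :=
        Finset.inf'_le f (hG.mem_toFinset.mpr hvG)
      linarith

/-- Key lemma: in a 2-separating premetric space, a sequence staying at distance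
at least `r > 0` from `x` cannot converge to `x` in the premetric topology. -/
lemma Premetric.not_tendsto_far (hsep : p.TwoSeparating) (w : ℕ → X) (x : X) {r : ℝ}
    (hr : 0 < r) (hfar : ∀ n, r ≤ p.d x (w n)) :
    ¬ Filter.Tendsto w Filter.atTop (@nhds X p.topology x) := by
  classical
  letI : TopologicalSpace X := p.topology
  intro hw
  set A : Set X := Set.range w with hA
  have hxA : x ∉ A := by
    rintro ⟨n, hn⟩
    have := hfar n
    rw [hn, p.refl x] at this
    linarith
  -- helper: preimage of an infinite subset of the range is infinite
  have hpreim : ∀ (f : ℕ → X) (T : Set X), T.Infinite → T ⊆ Set.range f →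
      {k | f k ∈ T}.Infinite := by
    intro f T hT hsub
    have himg : T ⊆ f '' {k | f k ∈ T} := by
      intro v hv
      obtain ⟨k, rfl⟩ := hsub hv
      exact ⟨k, hv, rfl⟩
    exact Set.Infinite.of_image f (hT.mono himg)
  by_cases hC : ∃ z, ∀ s > (0:ℝ), (p.ball z s ∩ A).Infinite
  · -- there is a ball-cluster point zs of A
    obtain ⟨zs, hzs⟩ := hC
    have hxz : x ≠ zs := by
      intro h
      obtain ⟨v, hv⟩ := (hzs r hr).nonempty
      obtain ⟨n, rfl⟩ := hv.2
      have h1 : p.d x (w n) < r := h ▸ hv.1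
      exact absurd h1 (not_lt.2 (hfar n))
    -- pick a subsequence of A wholesale-converging to zs
    have hpick : ∀ k : ℕ, ∃ v, v ∈ A ∧ v ≠ zs ∧ p.d zs v < 1/((k:ℝ)+1) := by
      intro k
      have hpos : (0:ℝ) < 1/((k:ℝ)+1) := by positivity
      obtain ⟨v, hv⟩ := ((hzs _ hpos).diff (Set.finite_singleton zs)).nonempty
      exact ⟨v, hv.1.2, by simpa using hv.2, hv.1.1⟩
    choose a ha hane had using hpick
    -- the range of a is infinite
    have hrange : (Set.range a).Infinite := by
      by_contra hfinr
      have hfin := Set.not_infinite.mp hfinr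
      by_cases hallfin : ∀ v ∈ Set.range a, {k | a k = v}.Finite
      · have hcover : (Set.univ : Set ℕ) ⊆ ⋃ v ∈ Set.range a, {k | a k = v} :=
          fun k _ => Set.mem_biUnion ⟨k, rfl⟩ rfl
        exact Set.infinite_univ (Set.Finite.subset (hfin.biUnion hallfin) hcover)
      · push_neg at hallfin
        obtain ⟨v, hvr, hvinf⟩ := hallfin
        have hvinf' : {k | a k = v}.Infinite := hvinf
        have hvzs : v ≠ zs := by
          obtain ⟨k, hk⟩ := hvinf'.nonempty
          exact hk ▸ hane k
        have hd : 0 < p.d zs v := Premetric.dpos hsep (Ne.symm hvzs)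
        obtain ⟨N, hN⟩ := exists_nat_one_div_lt hd
        obtain ⟨k, hk, hkN⟩ := hvinf'.exists_gt N
        have h1 : p.d zs v < 1/((k:ℝ)+1) := by
          have := had k
          rwa [hk] at this
        have hNk : ((N:ℝ)+1) ≤ ((k:ℝ)+1) := by
          have : (N:ℝ) < k := by exact_mod_cast hkN
          linarith
        have h2 : (1:ℝ)/((k:ℝ)+1) ≤ 1/((N:ℝ)+1) :=
          one_div_le_one_div_of_le (by positivity) hNk
        linarith
    set As : Set X := Set.range a with hAs
    set U : Set X := {v | v ≠ zs ∧ v ∉ As} with hU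
    have hUopen : IsOpen U := by
      show ∀ z ∈ U, ∃ s > 0, p.ball z s ⊆ U
      rintro z ⟨hzzs, hzAs⟩
      -- small balls around z meet As only finitely
      have hzfin : ∃ s > (0:ℝ), (p.ball z s ∩ As).Finite := by
        by_contra hcon
        push_neg at hcon
        obtain ⟨ρ, hρ, hρle, hρdisj⟩ := Premetric.sep' hsep hzzs
        have hT : (p.ball z ρ ∩ As).Infinite := hcon ρ hρ
        have hK := hpreim a _ hT (fun v hv => hv.2)
        obtain ⟨N, hN⟩ := exists_nat_one_div_lt hρ
        obtain ⟨k, hkK, hkN⟩ := hK.exists_gt N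
        have h1 : p.d z (a k) < ρ := hkK.1
        have hNk : ((N:ℝ)+1) ≤ ((k:ℝ)+1) := by
          have : (N:ℝ) < k := by exact_mod_cast hkN
          linarith
        have h2 : p.d zs (a k) < ρ := by
          have hdk := had k
          have : (1:ℝ)/((k:ℝ)+1) ≤ 1/((N:ℝ)+1) :=
            one_div_le_one_div_of_le (by positivity) hNk
          linarith
        exact hρdisj _ h1 h2
      obtain ⟨s, hs, hFfin⟩ := hzfin
      have hGfin : (insert zs (p.ball z s ∩ As)).Finite := hFfin.insert zs
      have hzG : z ∉ insert zs (p.ball z s ∩ As) := by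
        intro h
        rcases h with h | h
        · exact hzzs h
        · exact hzAs h.2
      obtain ⟨t, ht, htG⟩ := Premetric.avoid hsep hGfin hzG
      refine ⟨min s t, lt_min hs ht, ?_⟩
      intro v hv
      have hv' : p.d z v < min s t := hv
      have hvs : p.d z v < s := lt_of_lt_of_le hv' (min_le_left _ _)
      have hvt : p.d z v < t := lt_of_lt_of_le hv' (min_le_right _ _)
      show v ≠ zs ∧ v ∉ As
      constructor
      · intro h
        exact htG zs (Set.mem_insert _ _) (h ▸ hvt)
      · intro hvAs
        exact htG v (Set.mem_insert_of_mem _ ⟨hvs, hvAs⟩) hvt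
    have hxU : x ∈ U := by
      refine ⟨hxz, ?_⟩
      intro hxAs
      obtain ⟨k, hk⟩ := hxAs
      exact hxA (hk ▸ ha k)
    have hev := hw (hUopen.mem_nhds hxU)
    rw [Filter.mem_map, Filter.mem_atTop_sets] at hev
    obtain ⟨N, hN⟩ := hev
    have hS : {n | w n ∈ As}.Infinite := by
      refine hpreim w As hrange ?_
      intro v hv
      obtain ⟨k, rfl⟩ := hv
      exact ha k
    obtain ⟨n, hnS, hnN⟩ := hS.exists_gt N
    exact (hN n (le_of_lt hnN)).2 hnS
  · -- no ball-cluster point: the complement of A is open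
    push_neg at hC
    have hC' : ∀ z, ∃ s > (0:ℝ), (p.ball z s ∩ A).Finite := by
      intro z
      obtain ⟨s, hs, hsf⟩ := hC z
      exact ⟨s, hs, hsf⟩
    set U : Set X := {v | v ∉ A} with hU
    have hUopen : IsOpen U := by
      show ∀ z ∈ U, ∃ s > 0, p.ball z s ⊆ U
      intro z hz
      obtain ⟨s, hs, hfin⟩ := hC' z
      have hzG : z ∉ (p.ball z s ∩ A) := fun h => hz h.2
      obtain ⟨t, ht, htG⟩ := Premetric.avoid hsep hfin hzG
      refine ⟨min s t, lt_min hs ht, ?_⟩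
      intro v hv
      have hv' : p.d z v < min s t := hv
      show v ∉ A
      intro hvA
      exact htG v ⟨lt_of_lt_of_le hv' (min_le_left _ _), hvA⟩
        (lt_of_lt_of_le hv' (min_le_right _ _))
    have hev := hw (hUopen.mem_nhds (show x ∈ U from hxA))
    rw [Filter.mem_map, Filter.mem_atTop_sets] at hev
    obtain ⟨N, hN⟩ := hev
    exact hN N le_rfl ⟨N, rfl⟩

end Aux

/-- A premetric space is 2-separating iff it is sequentially Hausdorff: limits of
convergent sequences in the premetric topology are unique. -/
theorem twoSeparating_iff_sequentiallyHausdorff {X : Type*} (p : Premetric X) :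
    p.TwoSeparating ↔
      ∀ (u : ℕ → X) (x y : X),
        Filter.Tendsto u Filter.atTop (@nhds X p.topology x) →
        Filter.Tendsto u Filter.atTop (@nhds X p.topology y) → x = y := by
  classical
  constructor
  · intro hsep u x y hux huy
    by_contra hxy
    obtain ⟨r, hr, hdisj⟩ := hsep x y hxy
    have hnot : ∀ v, p.d x v < r → ¬ p.d y v < r := by
      intro v h1 h2
      exact Set.eq_empty_iff_forall_notMem.mp hdisj v ⟨h1, h2⟩
    by_cases hP : {n | p.d x (u n) < r}.Infinite
    · -- pass to a subsequence inside B(x,r): it converges to y yet stays far from y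
      have hfr : ∃ᶠ n in Filter.atTop, p.d x (u n) < r := by
        rw [Filter.frequently_atTop]
        intro N
        obtain ⟨n, hn, hnN⟩ := hP.exists_gt N
        exact ⟨n, le_of_lt hnN, hn⟩
      obtain ⟨φ, hφmono, hφ⟩ := Filter.extraction_of_frequently_atTop hfr
      have hvy : Filter.Tendsto (fun k => u (φ k)) Filter.atTop
          (@nhds X p.topology y) := huy.comp hφmono.tendsto_atTop
      exact Premetric.not_tendsto_far hsep (fun k => u (φ k)) y hr
        (fun k => not_lt.mp (hnot _ (hφ k))) hvy
    · -- a tail of u stays far from x, yet converges to x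
      have hfin := Set.not_infinite.mp hP
      obtain ⟨N, hN⟩ := hfin.bddAbove
      have hwx : Filter.Tendsto (fun n => u (n + (N+1))) Filter.atTop
          (@nhds X p.topology x) := hux.comp (Filter.tendsto_add_atTop_nat (N+1))
      refine Premetric.not_tendsto_far hsep (fun n => u (n + (N+1))) x hr ?_ hwx
      intro n
      by_contra hlt
      push_neg at hlt
      have hmem : n + (N+1) ∈ {n | p.d x (u n) < r} := hlt
      have := hN hmem
      omega
  · intro hseq x y hxy
    by_contra hcon
    push_neg at hcon
    have hpick : ∀ n : ℕ, ∃ v, p.d x v < 1/((n:ℝ)+1) ∧ p.d y v < 1/((n:ℝ)+1) := by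
      intro n
      have hpos : (0:ℝ) < 1/((n:ℝ)+1) := by positivity
      obtain ⟨v, hv1, hv2⟩ := hcon _ hpos
      exact ⟨v, hv1, hv2⟩
    choose u hux huy using hpick
    have htend : ∀ c : X, (∀ n, p.d c (u n) < 1/((n:ℝ)+1)) →
        Filter.Tendsto u Filter.atTop (@nhds X p.topology c) := by
      intro c hc
      letI : TopologicalSpace X := p.topology
      rw [Filter.tendsto_def]
      intro s hs
      obtain ⟨V, hVs, hVopen, hcV⟩ := mem_nhds_iff.mp hs
      have hVopen' : ∀ z ∈ V, ∃ ρ > (0:ℝ), p.ball z ρ ⊆ V := hVopen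
      obtain ⟨ρ, hρ, hball⟩ := hVopen' c hcV
      obtain ⟨N, hN⟩ := exists_nat_one_div_lt hρ
      rw [Filter.mem_atTop_sets]
      refine ⟨N, fun n hn => ?_⟩
      have hNn : ((N:ℝ)+1) ≤ ((n:ℝ)+1) := by
        have : (N:ℝ) ≤ n := by exact_mod_cast hn
        linarith
      have h1 : (1:ℝ)/((n:ℝ)+1) ≤ 1/((N:ℝ)+1) :=
        one_div_le_one_div_of_le (by positivity) hNn
      have h2 : p.d c (u n) < ρ := by
        have := hc n
        linarith
      exact hVs (hball h2)
    exact hxy (hseq u x y (htend x hux) (htend y huy))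
end

section
/- For a 2-separating premetric space X, the following are equivalent: (1) X is basic; (2) the premetric topology on X is first-countable; (3) the premetric topology on X is Fréchet–Urysohn. Moreover, in that case X is Hausdorff. -/
namespace Premetric

variable {X : Type*} {p : Premetric X}

lemma aux_pos_of_ne (h2 : p.TwoSeparating) {a b : X} (h : a ≠ b) : 0 < p.d a b := by
  obtain ⟨r, hr, hdisj⟩ := h2 a b h
  rcases lt_or_ge (p.d a b) r with hlt | hle
  · exfalso
    have hb : b ∈ p.ball a r ∩ p.ball b r := ⟨hlt, by simp [ball, p.refl, hr]⟩
    rw [hdisj] at hb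
    exact hb
  · linarith

/-- Chain-reachability from `x` with step sizes given by `σ`. -/
inductive Reach (p : Premetric X) (σ : X → ℝ) (x : X) : X → Prop
  | base : Reach p σ x x
  | step {y w : X} : Reach p σ x y → p.d y w < σ y → Reach p σ x w

lemma aux_reach_isOpen {σ : X → ℝ} (hσ : ∀ y, 0 < σ y) (x : X) :
    @IsOpen X p.topology {y | p.Reach σ x y} := by
  show ∀ u ∈ {y | p.Reach σ x y}, ∃ r > 0, p.ball u r ⊆ {y | p.Reach σ x y}
  intro u hu
  exact ⟨σ u, hσ u, fun v hv => Reach.step hu hv⟩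

lemma aux_blocked (h2 : p.TwoSeparating) {x y : X} (hxy : x ≠ y) (w : ℕ → X)
    (hxw : ∀ i, w i ≠ x)
    (hgood : ∀ y', y' ≠ y → ∃ r > 0, ∀ i, w i ≠ y' → r ≤ p.d y' (w i)) :
    ¬ Filter.Tendsto w Filter.atTop (@nhds X p.topology x) := by
  classical
  choose! rfn hrpos hrle using hgood
  have hsep : ∀ y', y' ≠ y → ∃ ρ > 0, p.ball y' ρ ∩ p.ball y ρ = ∅ :=
    fun y' h => h2 y' y h
  choose! sfn hspos hsdisj using hsep
  set σ : X → ℝ := fun u => if h : u = y then 1 else min (rfn u) (sfn u) with hσdef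
  have hσpos : ∀ u, 0 < σ u := by
    intro u
    by_cases h : u = y
    · simp [hσdef, h]
    · simp only [hσdef, h, dif_neg, not_false_iff]
      exact lt_min (hrpos u h) (hspos u h)
  have hinv : ∀ v, p.Reach σ x v → v ≠ y ∧ ∀ i, w i ≠ v := by
    intro v hv
    induction hv with
    | base => exact ⟨hxy, hxw⟩
    | @step u v hu hd ih =>
      have huy : u ≠ y := ih.1
      have hσu : σ u = min (rfn u) (sfn u) := by simp [hσdef, huy]
      constructor
      · intro hvy
        subst hvy
        have h1 : p.d u v < sfn u := lt_of_lt_of_le (hσu ▸ hd) (min_le_right _ _)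
        have hmem : v ∈ p.ball u (sfn u) ∩ p.ball v (sfn u) :=
          ⟨h1, by simp [ball, p.refl, hspos u huy]⟩
        rw [hsdisj u huy] at hmem
        exact hmem
      · intro i hiv
        have h1 : rfn u ≤ p.d u (w i) := hrle u huy i (ih.2 i)
        rw [hiv] at h1
        have h2' : p.d u v < rfn u := lt_of_lt_of_le (hσu ▸ hd) (min_le_left _ _)
        linarith
  intro htend
  have hR : {y' | p.Reach σ x y'} ∈ @nhds X p.topology x := by
    letI := p.topology
    exact (aux_reach_isOpen hσpos x).mem_nhds Reach.base
  have hev : ∀ᶠ i in Filter.atTop, w i ∈ {y' | p.Reach σ x y'} :=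
    htend.eventually_mem hR
  obtain ⟨i, hi⟩ := hev.exists
  exact (hinv _ hi).2 i rfl

lemma aux_good_of_eventually (h2 : p.TwoSeparating) {y' : X} {w : ℕ → X}
    (h : ∃ δ > 0, ∀ᶠ i in Filter.atTop, δ ≤ p.d y' (w i)) :
    ∃ r > 0, ∀ i, w i ≠ y' → r ≤ p.d y' (w i) := by
  obtain ⟨δ, hδ, hev⟩ := h
  obtain ⟨N, hN⟩ := Filter.eventually_atTop.mp hev
  have hfin : ∀ M : ℕ, ∃ r > 0, ∀ i < M, w i ≠ y' → r ≤ p.d y' (w i) := by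
    intro M
    induction M with
    | zero => exact ⟨1, one_pos, fun i hi => absurd hi (Nat.not_lt_zero i)⟩
    | succ M ih =>
      obtain ⟨r, hr, hrle⟩ := ih
      by_cases hM : w M = y'
      · refine ⟨r, hr, fun i hi hne => ?_⟩
        rcases Nat.lt_succ_iff_lt_or_eq.mp hi with h | h
        · exact hrle i h hne
        · subst h; exact absurd hM hne
      · refine ⟨min r (p.d y' (w M)), lt_min hr (aux_pos_of_ne h2 (Ne.symm hM)), ?_⟩
        intro i hi hne
        rcases Nat.lt_succ_iff_lt_or_eq.mp hi with h | h
        · exact le_trans (min_le_left _ _) (hrle i h hne)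
        · subst h; exact min_le_right _ _
  obtain ⟨r, hr, hrle⟩ := hfin N
  refine ⟨min δ r, lt_min hδ hr, fun i hne => ?_⟩
  rcases lt_or_ge i N with hi | hi
  · exact le_trans (min_le_right _ _) (hrle i hi hne)
  · exact le_trans (min_le_left _ _) (hN i hi)

lemma aux_key (h2 : p.TwoSeparating) {x : X} {z : ℕ → X} {ε : ℝ} (hε : 0 < ε)
    (hd : ∀ k, ε ≤ p.d x (z k))
    (hz : Filter.Tendsto z Filter.atTop (@nhds X p.topology x)) : False := by
  classical
  have hzx : ∀ k, z k ≠ x := by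
    intro k h
    have := hd k
    rw [h, p.refl] at this
    linarith
  by_cases hA : ∃ y, ∀ δ > 0, ∃ᶠ k in Filter.atTop, p.d y (z k) < δ
  · obtain ⟨y, hy⟩ := hA
    have hyx : y ≠ x := by
      intro h
      subst h
      obtain ⟨k, hk⟩ := (hy ε hε).exists
      exact absurd (hd k) (not_le.mpr hk)
    have hfreq : ∀ n : ℕ, ∃ᶠ k in Filter.atTop, p.d y (z k) < 1 / (n + 1) := by
      intro n
      exact hy _ (by positivity)
    obtain ⟨φ, hφmono, hφ⟩ := Filter.extraction_forall_of_frequently hfreq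
    set w : ℕ → X := z ∘ φ with hwdef
    have hwt : Filter.Tendsto w Filter.atTop (@nhds X p.topology x) :=
      hz.comp hφmono.tendsto_atTop
    refine aux_blocked h2 (Ne.symm hyx) w (fun i => hzx (φ i)) ?_ hwt
    intro y' hy'y
    apply aux_good_of_eventually h2
    obtain ⟨ρ, hρ, hρdisj⟩ := h2 y' y hy'y
    refine ⟨ρ, hρ, ?_⟩
    have h1 : ∀ᶠ i : ℕ in Filter.atTop, (1 : ℝ) / (i + 1) < ρ := by
      have := tendsto_one_div_add_atTop_nhds_zero_nat (𝕜 := ℝ)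
      exact this.eventually_lt_const hρ
    filter_upwards [h1] with i hi
    by_contra hlt
    push_neg at hlt
    have hmem : w i ∈ p.ball y' ρ ∩ p.ball y ρ :=
      ⟨hlt, lt_trans (hφ i) hi⟩
    rw [hρdisj] at hmem
    exact hmem
  · push_neg at hA
    have hgood : ∀ y', ∃ δ > 0, ∀ᶠ k in Filter.atTop, δ ≤ p.d y' (z k) := by
      intro y'
      obtain ⟨δ, hδ, hfr⟩ := hA y'
      refine ⟨δ, hδ, ?_⟩
      have := hfr
      filter_upwards [this] with k hk
      exact hk
    refine aux_blocked h2 (Ne.symm (hzx 0)) z hzx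
      (fun y' _ => aux_good_of_eventually h2 (hgood y')) hz

lemma aux_basic_of_fu (h2 : p.TwoSeparating)
    (hfu : @FrechetUrysohnSpace X p.topology) : p.Basic := by
  letI := p.topology
  haveI := hfu
  intro x r hr
  by_contra hmem
  have hx : x ∈ closure (p.ball x r)ᶜ := by
    rw [mem_closure_iff_nhds]
    intro t ht
    by_contra hemp
    rw [Set.not_nonempty_iff_eq_empty] at hemp
    have : t ⊆ p.ball x r := by
      intro v hv
      by_contra hvn
      exact Set.eq_empty_iff_forall_notMem.mp hemp v ⟨hv, hvn⟩
    exact hmem (Filter.mem_of_superset ht this)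
  obtain ⟨u, hu_mem, hu_tend⟩ := mem_closure_iff_seq_limit.mp hx
  exact aux_key h2 hr (fun k => not_lt.mp (hu_mem k)) hu_tend

lemma aux_fc_of_basic (hb : p.Basic) : @FirstCountableTopology X p.topology := by
  letI := p.topology
  constructor
  intro x
  have hbasis : (nhds x).HasBasis (fun _ : ℕ => True)
      (fun n => p.ball x (1 / (n + 1))) := by
    constructor
    intro s
    constructor
    · intro hs
      obtain ⟨U, hUs, hUopen, hxU⟩ := mem_nhds_iff.mp hs
      obtain ⟨r, hr, hrU⟩ := hUopen x hxU
      obtain ⟨n, hn⟩ := exists_nat_one_div_lt hr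
      refine ⟨n, trivial, fun v hv => hUs (hrU ?_)⟩
      exact lt_trans hv hn
    · rintro ⟨n, -, hsub⟩
      exact Filter.mem_of_superset (hb x (1 / (n + 1)) (by positivity)) hsub
  exact hbasis.isCountablyGenerated

lemma aux_t2_of_basic (h2 : p.TwoSeparating) (hb : p.Basic) :
    @T2Space X p.topology := by
  letI := p.topology
  rw [t2Space_iff_disjoint_nhds]
  intro x y hxy
  obtain ⟨r, hr, hdisj⟩ := h2 x y hxy
  rw [Filter.disjoint_iff]
  exact ⟨p.ball x r, hb x r hr, p.ball y r, hb y r hr,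
    Set.disjoint_iff_inter_eq_empty.mpr hdisj⟩

end Premetric

/-- For a 2-separating premetric space the following are equivalent: it is basic;
its premetric topology is first-countable; its premetric topology is
Fréchet–Urysohn. Moreover, in that case the topology is Hausdorff. -/
theorem twoSeparating_basic_iff_firstCountable_iff_frechetUrysohn
    {X : Type*} (p : Premetric X) (h2 : p.TwoSeparating) :
    (p.Basic ↔ @FirstCountableTopology X p.topology) ∧
    (p.Basic ↔ @FrechetUrysohnSpace X p.topology) ∧
    (p.Basic → @T2Space X p.topology) := by
  have hfc := fun hb => Premetric.aux_fc_of_basic (p := p) hb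
  have hfu_of_fc : @FirstCountableTopology X p.topology →
      @FrechetUrysohnSpace X p.topology := by
    intro h
    letI := p.topology
    haveI := h
    infer_instance
  refine ⟨⟨hfc, fun h => Premetric.aux_basic_of_fu h2 (hfu_of_fc h)⟩,
    ⟨fun hb => hfu_of_fc (hfc hb), Premetric.aux_basic_of_fu h2⟩,
    Premetric.aux_t2_of_basic h2⟩
end
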